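/- arXiv:1204.5667 — 3 statements merged into one kernel-verified Lean document; each statement's English description precedes it below -/
import Mathlib

section
/- Let T : 𝔸 → 𝔸 be a bi-measurable bijection of the semi-infinite cylinder which preserves Lebesgue measure, and let ℰ(T) = {p ∈ 𝔸 : the second coordinate of T^n(p) tends to ∞ as n → ∞}. Then ℰ(T) is T-invariant and its Lebesgue measure is either zero or infinite. -/
/-!
The escaping set `E` is invariant because escaping is a property of the tail of the orbit.
Invariance makes `T` preserve Lebesgue measure restricted to `E`. If `E` had finite measure,
Poincaré recurrence for this finite measure would make almost every point of `E` return
infinitely often to a bounded slab `{y ≤ m}` it started in, which no escaping point does;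
so `E` is null.
-/

open MeasureTheory Filter Set

noncomputable section

local instance : Fact ((0:ℝ) < 2 * Real.pi) := ⟨by positivity⟩

/-- The circle `ℝ/2πℤ`. -/
abbrev Torus : Type := AddCircle (2 * Real.pi)

/-- The semi-infinite cylinder `𝔸 = 𝕋¹ × (0,∞)`. -/
def Cyl : Set (Torus × ℝ) := (Set.univ : Set Torus) ×ˢ Set.Ioi (0 : ℝ)

/-- The escaping set of a map of the cylinder. -/
def escaping (F : Torus × ℝ → Torus × ℝ) : Set (Torus × ℝ) :=
  {p | p ∈ Cyl ∧ Tendsto (fun n : ℕ => ((F^[n]) p).2) atTop atTop}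

theorem tendsto_iterate_apply_iff {α β : Type*} (F : α → α) (g : α → β) (l : Filter β)
    (p : α) :
    Tendsto (fun n => g (F^[n] (F p))) atTop l ↔ Tendsto (fun n => g (F^[n] p)) atTop l := by
  simp_rw [← Function.iterate_succ_apply]
  exact tendsto_add_atTop_iff_nat (f := fun n => g (F^[n] p)) 1

theorem MeasureTheory.MeasurePreserving.restrict_of_preimage_inter_eq {α : Type*}
    [MeasurableSpace α] {μ : Measure α} {T : α → α} {s E : Set α}
    (hT : MeasurePreserving T (μ.restrict s) (μ.restrict s))
    (hE : MeasurableSet E) (hpre : T ⁻¹' E ∩ s = E) :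
    MeasurePreserving T (μ.restrict E) (μ.restrict E) := by
  have hEs : E ⊆ s := hpre ▸ inter_subset_right
  have := hT.restrict_preimage hE
  rwa [Measure.restrict_restrict (hT.measurable hE), hpre, Measure.restrict_restrict hE,
    inter_eq_left.2 hEs] at this

theorem MeasureTheory.Conservative.eq_zero_of_ae_tendsto_atTop {α : Type*} [MeasurableSpace α]
    {μ : Measure α} {T : α → α} (hT : Conservative T μ) {f : α → ℝ} (hf : Measurable f)
    (h : ∀ᵐ x ∂μ, Tendsto (fun n => f (T^[n] x)) atTop atTop) : μ = 0 := by
  have hrec : ∀ᵐ x ∂μ, ∀ m : ℕ, f x ≤ m → ∃ᶠ n in atTop, f (T^[n] x) ≤ m :=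
    ae_all_iff.2 fun m =>
      hT.ae_mem_imp_frequently_image_mem (hf measurableSet_Iic).nullMeasurableSet
  rw [← ae_eq_bot, ← eventually_false_iff_eq_bot]
  filter_upwards [h, hrec] with x hesc hret
  obtain ⟨m, hm⟩ := exists_nat_ge (f x)
  obtain ⟨n, hle, hgt⟩ :=
    ((hret m hm).and_eventually (hesc.eventually_gt_atTop (m : ℝ))).exists
  exact hle.not_gt hgt

theorem measurableSet_escaping {T : Torus × ℝ → Torus × ℝ} (hT : Measurable T) :
    MeasurableSet (escaping T) :=
  (MeasurableSet.univ.prod measurableSet_Ioi).inter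
    (measurableSet_tendsto atTop fun n => (hT.iterate n).snd)

theorem apply_mem_escaping_iff {T : Torus × ℝ → Torus × ℝ} (hT : MapsTo T Cyl Cyl)
    {p : Torus × ℝ} (hp : p ∈ Cyl) : T p ∈ escaping T ↔ p ∈ escaping T :=
  and_congr (iff_of_true (hT hp) hp) (tendsto_iterate_apply_iff T Prod.snd atTop p)

theorem preimage_escaping_inter_Cyl {T : Torus × ℝ → Torus × ℝ} (hT : MapsTo T Cyl Cyl) :
    T ⁻¹' escaping T ∩ Cyl = escaping T := by
  ext p
  exact ⟨fun ⟨hTp, hp⟩ => (apply_mem_escaping_iff hT hp).1 hTp,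
    fun hp => ⟨(apply_mem_escaping_iff hT hp.1).2 hp, hp.1⟩⟩

theorem image_escaping {T : Torus × ℝ → Torus × ℝ} (hT : BijOn T Cyl Cyl) :
    T '' escaping T = escaping T := by
  refine Subset.antisymm ?_ fun q hq => ?_
  · rintro _ ⟨p, hp, rfl⟩
    exact (apply_mem_escaping_iff hT.mapsTo hp.1).2 hp
  · obtain ⟨p, hp, rfl⟩ := hT.surjOn hq.1
    exact ⟨p, (apply_mem_escaping_iff hT.mapsTo hp).1 hq, rfl⟩

theorem escaping_set_invariant_and_zero_or_infinite_measure_general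
    (T : Torus × ℝ → Torus × ℝ)
    (hbij : Set.BijOn T Cyl Cyl)
    (hmp : MeasurePreserving T (volume.restrict Cyl) (volume.restrict Cyl)) :
    T '' escaping T = escaping T ∧
      (volume (escaping T) = 0 ∨ volume (escaping T) = ⊤) := by
  refine ⟨image_escaping hbij, or_iff_not_imp_right.2 fun hfin => ?_⟩
  have hE := measurableSet_escaping hmp.measurable
  have : IsFiniteMeasure (volume.restrict (escaping T)) :=
    ⟨by rwa [Measure.restrict_apply_univ, lt_top_iff_ne_top]⟩
  have hcons : Conservative T (volume.restrict (escaping T)) :=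
    (hmp.restrict_of_preimage_inter_eq hE (preimage_escaping_inter_Cyl hbij.mapsTo)).conservative
  rw [← Measure.restrict_eq_zero]
  exact hcons.eq_zero_of_ae_tendsto_atTop measurable_snd
    (ae_restrict_of_forall_mem hE fun _ hp => hp.2)

/-- The escaping set of a bi-measurable measure-preserving bijection of the cylinder is
invariant, and it has either zero or infinite Lebesgue measure. -/
theorem escaping_set_invariant_and_zero_or_infinite_measure
    (T S : Torus × ℝ → Torus × ℝ)
    (hbij : Set.BijOn T Cyl Cyl)
    (hmeasT : Measurable T) (hmeasS : Measurable S)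
    (hinv : Set.InvOn S T Cyl Cyl)
    (hmp : MeasurePreserving T (volume.restrict Cyl) (volume.restrict Cyl)) :
    T '' escaping T = escaping T ∧
      (volume (escaping T) = 0 ∨ volume (escaping T) = ⊤) :=
  escaping_set_invariant_and_zero_or_infinite_measure_general T hbij hmp

end
end

section
/- Fix δ ∈ (0, π/4). There exist constants 𝓛₀ > 0 and C > 0, depending only on δ and on the function φ below, such that the following holds. Let I be an interval with δ/4 < |I| < δ, let ρ be a regular probability density on I with associated measure ℙ, and let φ : I → ℝ be a smooth function with at most one critical point in I, every critical point being non-degenerate, normalized so that sup_I |φ'| ≤ 1. For 𝓛 ≥ 𝓛₀ define Θ : I → 𝕋¹ by Θ(x) = 𝓛·φ(x) mod 2π, set D = {x ∈ I : |Θ'(x)| < 𝓛^(1/2)} and 𝓛̂ = inf_{I∖D} |Θ'(x)| (so 𝓛̂ ≤ 𝓛). Then for every B ∈ C¹(I) and every continuous 𝒜 : 𝕋¹ → ℝ with ∫_{𝕋¹} 𝒜 = 0 one has |∫_I B(x)·𝒜(Θ(x))·ρ(x) dx| ≤ ‖𝒜‖_∞ · ( ‖B‖_∞ · (ℙ(D)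 + C·𝓛̂^(−1)) + ‖B'‖_{∞, I∖D} · C · 𝓛^(−1) · log 𝓛 ). -/
open Set Real MeasureTheory

noncomputable section

/-- Derivative within the interval `[a,b]`. -/
def dIcc (a b : ℝ) (f : ℝ → ℝ) : ℝ → ℝ := fun x => derivWithin f (Set.Icc a b) x

/-- Supremum of `|f|` over a set. -/
def supAbsOn (f : ℝ → ℝ) (s : Set ℝ) : ℝ := sSup ((fun x => |f x|) '' s)

open intervalIntegral
lemma le_supAbsOn {g : ℝ → ℝ} {s : Set ℝ} (h : BddAbove ((fun x => |g x|) '' s))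
    {x : ℝ} (hx : x ∈ s) : |g x| ≤ supAbsOn g s :=
  le_csSup h ⟨x, hx, rfl⟩

lemma bddAbove_absImage {g : ℝ → ℝ} {s : Set ℝ} (hs : IsCompact s) (hg : ContinuousOn g s) :
    BddAbove ((fun x => |g x|) '' s) :=
  (hs.image_of_continuousOn hg.abs).bddAbove

lemma supAbsOn_nonneg {g : ℝ → ℝ} {s : Set ℝ} (hs : IsCompact s) (hg : ContinuousOn g s) :
    0 ≤ supAbsOn g s := by
  rcases s.eq_empty_or_nonempty with rfl | ⟨x, hx⟩
  · simp [supAbsOn, Real.sSup_empty]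
  · exact le_trans (abs_nonneg _) (le_supAbsOn (bddAbove_absImage hs hg) hx)

lemma abs_le_supAbs_of_periodic {𝒜 : ℝ → ℝ} (hA : Continuous 𝒜)
    (hper : Function.Periodic 𝒜 (2 * π)) (θ : ℝ) :
    |𝒜 θ| ≤ supAbsOn 𝒜 (Icc 0 (2 * π)) := by
  obtain ⟨y, hy, hEq⟩ := hper.exists_mem_Ico₀ Real.two_pi_pos θ
  rw [hEq]
  exact le_supAbsOn (bddAbove_absImage isCompact_Icc hA.continuousOn) (Ico_subset_Icc_self hy)

lemma primitive_periodic {𝒜 : ℝ → ℝ} (hA : Continuous 𝒜)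
    (hper : Function.Periodic 𝒜 (2 * π))
    (hmean : (∫ θ in (0:ℝ)..(2 * π), 𝒜 θ) = 0) :
    Function.Periodic (fun θ => ∫ t in (0:ℝ)..θ, 𝒜 t) (2 * π) := by
  intro x
  have h1 : (∫ t in (0:ℝ)..x, 𝒜 t) + (∫ t in x..(x + 2 * π), 𝒜 t)
      = ∫ t in (0:ℝ)..(x + 2 * π), 𝒜 t :=
    integral_add_adjacent_intervals (hA.intervalIntegrable _ _) (hA.intervalIntegrable _ _)
  have h2 : (∫ t in x..(x + 2 * π), 𝒜 t) = ∫ t in (0:ℝ)..(0 + 2 * π), 𝒜 t :=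
    hper.intervalIntegral_add_eq x 0
  simp only [zero_add] at h2
  simp [← h1, h2, hmean]

lemma primitive_bound {𝒜 : ℝ → ℝ} (hA : Continuous 𝒜)
    (hper : Function.Periodic 𝒜 (2 * π))
    (hmean : (∫ θ in (0:ℝ)..(2 * π), 𝒜 θ) = 0) (θ : ℝ) :
    |∫ t in (0:ℝ)..θ, 𝒜 t| ≤ 2 * π * supAbsOn 𝒜 (Icc 0 (2 * π)) := by
  obtain ⟨y, hy, hEq⟩ := (primitive_periodic hA hper hmean).exists_mem_Ico₀ Real.two_pi_pos θ
  rw [hEq]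
  have hb : ∀ t ∈ Set.uIoc 0 y, ‖𝒜 t‖ ≤ supAbsOn 𝒜 (Icc 0 (2 * π)) := by
    intro t _
    simpa [Real.norm_eq_abs] using abs_le_supAbs_of_periodic hA hper t
  have := intervalIntegral.norm_integral_le_of_norm_le_const hb
  rw [Real.norm_eq_abs] at this
  have hA0 : 0 ≤ supAbsOn 𝒜 (Icc 0 (2 * π)) := supAbsOn_nonneg isCompact_Icc hA.continuousOn
  have hy2 : |y - 0| ≤ 2 * π := by
    rw [abs_of_nonneg (by simpa using hy.1)]
    simpa using le_of_lt hy.2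
  calc |∫ t in (0:ℝ)..y, 𝒜 t| ≤ supAbsOn 𝒜 (Icc 0 (2 * π)) * |y - 0| := this
    _ ≤ supAbsOn 𝒜 (Icc 0 (2 * π)) * (2 * π) := by
        exact mul_le_mul_of_nonneg_left hy2 hA0
    _ = 2 * π * supAbsOn 𝒜 (Icc 0 (2 * π)) := by ring

lemma density_sup_bound (a b δ : ℝ) (hab : a < b) (hδ0 : 0 < δ) (hδ1 : δ < 1)
    (hI1 : δ / 4 < b - a) (hI2 : b - a < δ)
    (ρ ρd : ℝ → ℝ)
    (hρc : ContinuousOn ρ (Icc a b))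
    (hρd : ∀ x ∈ Icc a b, HasDerivWithinAt ρ (ρd x) (Icc a b) x)
    (hρpos : ∀ x ∈ Icc a b, 0 < ρ x)
    (hint : (∫ x in Icc a b, ρ x) = 1)
    (hreg : ∀ x ∈ Icc a b, |ρd x| ≤ ρ x) :
    ∀ x ∈ Icc a b, ρ x ≤ 4 * Real.exp 1 / δ := by
  obtain ⟨x₁, hx₁I, hx₁min⟩ :=
    isCompact_Icc.exists_isMinOn (nonempty_Icc.2 hab.le) hρc
  have hmin : ∀ y ∈ Icc a b, ρ x₁ ≤ ρ y := fun y hy => hx₁min hy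
  -- ρ x₁ ≤ 1/(b-a)
  have hρint : IntegrableOn ρ (Icc a b) := hρc.integrableOn_compact isCompact_Icc
  have hconst : (∫ _x in Icc a b, ρ x₁) ≤ ∫ x in Icc a b, ρ x :=
    setIntegral_mono_on (integrableOn_const (by simp)) hρint
      measurableSet_Icc (fun y hy => hmin y hy)
  have hconst2 : (∫ _x in Icc a b, ρ x₁) = (b - a) * ρ x₁ := by
    rw [setIntegral_const]
    simp [Real.volume_Icc, ENNReal.toReal_ofReal (by linarith : (0:ℝ) ≤ b - a), smul_eq_mul]
    exact Or.inl hab.le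
  have hx₁le : ρ x₁ ≤ 1 / (b - a) := by
    rw [hconst2, hint] at hconst
    rw [le_div_iff₀ (by linarith)]
    linarith [hconst]
  -- log estimate
  have hlog : ∀ x ∈ Icc a b, |Real.log (ρ x) - Real.log (ρ x₁)| ≤ 1 := by
    intro x hx
    have key := Convex.norm_image_sub_le_of_norm_hasDerivWithin_le
      (f := fun y => Real.log (ρ y)) (f' := fun y => (ρ y)⁻¹ * ρd y)
      (fun y hy => ((Real.hasDerivAt_log (hρpos y hy).ne').comp_hasDerivWithinAt y
        (hρd y hy)))
      (C := 1) (fun y hy => by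
        have h1 := hreg y hy
        have h2 := hρpos y hy
        rw [Real.norm_eq_abs, abs_mul, abs_inv, abs_of_pos h2]
        rw [inv_mul_le_iff₀ h2]
        linarith)
      (convex_Icc a b) hx₁I hx
    rw [Real.norm_eq_abs, Real.norm_eq_abs] at key
    calc |Real.log (ρ x) - Real.log (ρ x₁)| ≤ 1 * |x - x₁| := key
      _ ≤ 1 := by
        rw [one_mul]
        rcases hx with ⟨h2, h3⟩; rcases hx₁I with ⟨h4, h5⟩
        rw [abs_le]; constructor <;> nlinarith
  intro x hx
  have h1 := hlog x hx
  have hpx := hρpos x hx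
  have hpx₁ := hρpos x₁ hx₁I
  have h2 : Real.log (ρ x) ≤ Real.log (ρ x₁) + 1 := by
    have := abs_le.1 h1
    linarith [this.2]
  have h3 : ρ x ≤ ρ x₁ * Real.exp 1 := by
    have := Real.exp_le_exp.2 h2
    rwa [Real.exp_add, Real.exp_log hpx, Real.exp_log hpx₁] at this
  have h4 : ρ x₁ ≤ 4 / δ := by
    have : 1 / (b - a) ≤ 4 / δ := by
      rw [div_le_div_iff₀ (by linarith) hδ0]
      nlinarith
    linarith [hx₁le]
  calc ρ x ≤ ρ x₁ * Real.exp 1 := h3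
    _ ≤ (4 / δ) * Real.exp 1 := by
        exact mul_le_mul_of_nonneg_right h4 (Real.exp_pos 1).le
    _ = 4 * Real.exp 1 / δ := by ring

lemma piece_bound (a b p q 𝓛 Lh K K' R M2 HB J1 J2 : ℝ)
    (φ f fd B Bd ρ ρd 𝒜 : ℝ → ℝ)
    (hpq : p ≤ q) (hsub : Icc p q ⊆ Icc a b)
    (h𝓛 : 0 < 𝓛) (hLh : 0 < Lh)
    (hφc : ContinuousOn φ (Icc a b))
    (hφd : ∀ x ∈ Ioo a b, HasDerivAt φ (f x) x)
    (hfc : ContinuousOn f (Icc a b))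
    (hfd : ∀ x ∈ Ioo a b, HasDerivAt f (fd x) x)
    (hfdc : ContinuousOn fd (Icc a b))
    (hBc : ContinuousOn B (Icc a b))
    (hBd : ∀ x ∈ Ioo a b, HasDerivAt B (Bd x) x)
    (hBdc : ContinuousOn Bd (Icc a b))
    (hρc : ContinuousOn ρ (Icc a b))
    (hρd : ∀ x ∈ Ioo a b, HasDerivAt ρ (ρd x) x)
    (hρdc : ContinuousOn ρd (Icc a b))
    (hA : Continuous 𝒜)
    (hHB : ∀ θ, |∫ t in (0:ℝ)..θ, 𝒜 t| ≤ HB)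
    (hfLh : ∀ x ∈ Icc p q, Lh ≤ |𝓛 * f x|)
    (hK : ∀ x ∈ Icc p q, |B x| ≤ K)
    (hK' : ∀ x ∈ Icc p q, |Bd x| ≤ K')
    (hR : ∀ x ∈ Icc p q, ρ x ≤ R) (hRnn : 0 ≤ R)
    (hρnn : ∀ x ∈ Icc p q, 0 ≤ ρ x)
    (hρd_le : ∀ x ∈ Icc p q, |ρd x| ≤ ρ x)
    (hM2 : ∀ x ∈ Icc p q, |fd x| ≤ M2)
    (hJ1 : (∫ x in p..q, |f x|⁻¹) ≤ J1)
    (hJ2 : (∫ x in p..q, ((f x) ^ 2)⁻¹) ≤ J2)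
    (hρ1 : (∫ x in p..q, ρ x) ≤ 1) :
    |∫ x in p..q, B x * 𝒜 (𝓛 * φ x) * ρ x| ≤
      HB * (2 * (K * R / Lh) + K / Lh + K' * R * J1 / 𝓛 + K * R * M2 * J2 / 𝓛) := by
  have hIoo : Ioo p q ⊆ Ioo a b := fun x hx =>
    ⟨lt_of_le_of_lt (hsub (left_mem_Icc.2 hpq)).1 hx.1,
     lt_of_lt_of_le hx.2 (hsub (right_mem_Icc.2 hpq)).2⟩
  set H : ℝ → ℝ := fun θ => ∫ t in (0:ℝ)..θ, 𝒜 t with hHdef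
  have hHd : ∀ θ, HasDerivAt H (𝒜 θ) θ := fun θ => (hA.integral_hasStrictDerivAt 0 θ).hasDerivAt
  have hHc : Continuous H := by
    rw [continuous_iff_continuousAt]; exact fun θ => (hHd θ).continuousAt
  have hfne : ∀ x ∈ Icc p q, f x ≠ 0 := by
    intro x hx h0
    have h1 := hfLh x hx
    rw [h0, mul_zero, abs_zero] at h1
    linarith
  have h𝓛fne : ∀ x ∈ Icc p q, 𝓛 * f x ≠ 0 := fun x hx =>
    mul_ne_zero h𝓛.ne' (hfne x hx)
  set u : ℝ → ℝ := fun x => B x * ρ x * (𝓛 * f x)⁻¹ with hu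
  set ud : ℝ → ℝ := fun x => (Bd x * ρ x + B x * ρd x) * (𝓛 * f x)⁻¹
      + B x * ρ x * (-(𝓛 * fd x) / ((𝓛 * f x) ^ 2)) with hud
  set G : ℝ → ℝ := fun x => u x * H (𝓛 * φ x) with hG
  set Gd : ℝ → ℝ := fun x => ud x * H (𝓛 * φ x) + B x * 𝒜 (𝓛 * φ x) * ρ x with hGd
  -- derivative of G on the interior
  have hGderiv : ∀ x ∈ Ioo p q, HasDerivAt G (Gd x) x := by
    intro x hx
    have hx' : x ∈ Ioo a b := hIoo hx
    have hxI : x ∈ Icc p q := Ioo_subset_Icc_self hx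
    have hfx : 𝓛 * f x ≠ 0 := h𝓛fne x hxI
    have h1 : HasDerivAt (fun y => 𝓛 * f y) (𝓛 * fd x) x := (hfd x hx').const_mul 𝓛
    have h2 : HasDerivAt (fun y => (𝓛 * f y)⁻¹) (-(𝓛 * fd x) / (𝓛 * f x) ^ 2) x := h1.inv hfx
    have h3 : HasDerivAt (fun y => B y * ρ y) (Bd x * ρ x + B x * ρd x) x :=
      (hBd x hx').mul (hρd x hx')
    have h4 : HasDerivAt u (ud x) x := h3.mul h2
    have h5 : HasDerivAt (fun y => H (𝓛 * φ y)) (𝒜 (𝓛 * φ x) * (𝓛 * f x)) x :=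
      by have := (hHd (𝓛 * φ x)).comp x ((hφd x hx').const_mul 𝓛); exact this
    have h6 : HasDerivAt (fun y => u y * H (𝓛 * φ y))
        (ud x * H (𝓛 * φ x) + u x * (𝒜 (𝓛 * φ x) * (𝓛 * f x))) x := h4.mul h5
    convert h6 using 1
    simp only [hGd, hG, hu]
    field_simp
    ring
    rw [mul_inv_cancel_right₀ (hfne x hxI)]
  -- continuity facts
  have hcsub : ∀ {g : ℝ → ℝ}, ContinuousOn g (Icc a b) → ContinuousOn g (Icc p q) :=
    fun hg => hg.mono hsub
  have hinvc : ContinuousOn (fun x => (𝓛 * f x)⁻¹) (Icc p q) :=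
    (continuousOn_const.mul (hcsub hfc)).inv₀ h𝓛fne
  have huc : ContinuousOn u (Icc p q) := ((hcsub hBc).mul (hcsub hρc)).mul hinvc
  have hudc : ContinuousOn ud (Icc p q) := by
    apply ContinuousOn.add
    · exact (((hcsub hBdc).mul (hcsub hρc)).add ((hcsub hBc).mul (hcsub hρdc))).mul hinvc
    · exact ((hcsub hBc).mul (hcsub hρc)).mul
        (((continuousOn_const.mul (hcsub hfdc)).neg).div
          ((continuousOn_const.mul (hcsub hfc)).pow 2) (fun x hx => pow_ne_zero 2 (h𝓛fne x hx)))
  have hHφc : ContinuousOn (fun x => H (𝓛 * φ x)) (Icc p q) :=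
    hHc.comp_continuousOn (continuousOn_const.mul (hcsub hφc))
  have hAφc : ContinuousOn (fun x => B x * 𝒜 (𝓛 * φ x) * ρ x) (Icc p q) :=
    ((hcsub hBc).mul (hA.comp_continuousOn (continuousOn_const.mul (hcsub hφc)))).mul (hcsub hρc)
  have hGc : ContinuousOn G (Icc p q) := huc.mul hHφc
  have hudHc : ContinuousOn (fun x => ud x * H (𝓛 * φ x)) (Icc p q) := hudc.mul hHφc
  have hGdc : ContinuousOn Gd (Icc p q) := hudHc.add hAφc
  have hGdint : IntervalIntegrable Gd volume p q := hGdc.intervalIntegrable_of_Icc hpq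
  have hudHint : IntervalIntegrable (fun x => ud x * H (𝓛 * φ x)) volume p q :=
    hudHc.intervalIntegrable_of_Icc hpq
  have hAφint : IntervalIntegrable (fun x => B x * 𝒜 (𝓛 * φ x) * ρ x) volume p q :=
    hAφc.intervalIntegrable_of_Icc hpq
  -- FTC
  have hFTC : (∫ x in p..q, Gd x) = G q - G p :=
    integral_eq_sub_of_hasDeriv_right_of_le hpq hGc
      (fun x hx => (hGderiv x hx).hasDerivWithinAt) hGdint
  have hsplit : (∫ x in p..q, Gd x)
      = (∫ x in p..q, ud x * H (𝓛 * φ x)) + ∫ x in p..q, B x * 𝒜 (𝓛 * φ x) * ρ x :=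
    integral_add hudHint hAφint
  have hmain : (∫ x in p..q, B x * 𝒜 (𝓛 * φ x) * ρ x)
      = G q - G p - ∫ x in p..q, ud x * H (𝓛 * φ x) := by
    rw [← hFTC, hsplit]; ring
  -- bounds
  have hKnn : 0 ≤ K := le_trans (abs_nonneg _) (hK p (left_mem_Icc.2 hpq))
  have hK'nn : 0 ≤ K' := le_trans (abs_nonneg _) (hK' p (left_mem_Icc.2 hpq))
  have hHBnn : 0 ≤ HB := le_trans (abs_nonneg _) (hHB 0)
  have hM2nn : 0 ≤ M2 := le_trans (abs_nonneg _) (hM2 p (left_mem_Icc.2 hpq))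
  have hGbound : ∀ x ∈ Icc p q, |G x| ≤ HB * (K * R / Lh) := by
    intro x hx
    have h1 : |u x| ≤ K * R / Lh := by
      have hfl := hfLh x hx
      have : |u x| = |B x| * ρ x * |𝓛 * f x|⁻¹ := by
        simp only [hu, abs_mul, abs_inv, abs_of_nonneg (hρnn x hx)]
      rw [this]
      have h2 : |𝓛 * f x|⁻¹ ≤ Lh⁻¹ := inv_anti₀ hLh hfl
      calc |B x| * ρ x * |𝓛 * f x|⁻¹ ≤ K * R * Lh⁻¹ := by
            apply mul_le_mul (mul_le_mul (hK x hx) (hR x hx) (hρnn x hx) hKnn) h2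
              (inv_nonneg.2 (abs_nonneg _)) (by positivity)
        _ = K * R / Lh := by rw [div_eq_mul_inv]
    calc |G x| = |u x| * |H (𝓛 * φ x)| := abs_mul _ _
      _ ≤ (K * R / Lh) * HB := mul_le_mul h1 (hHB _) (abs_nonneg _) (by positivity)
      _ = HB * (K * R / Lh) := by ring
  -- pointwise bound on |ud x|
  have hudbound : ∀ x ∈ Icc p q,
      |ud x| ≤ K' * R / 𝓛 * |f x|⁻¹ + K / Lh * ρ x + K * R * M2 / 𝓛 * ((f x) ^ 2)⁻¹ := by
    intro x hx
    have hfx := hfne x hx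
    have hfl := hfLh x hx
    have habs𝓛f : |𝓛 * f x| = 𝓛 * |f x| := by
      rw [abs_mul, abs_of_pos h𝓛]
    have hfabs : 0 < |f x| := abs_pos.2 hfx
    have t1 : |(Bd x * ρ x + B x * ρd x) * (𝓛 * f x)⁻¹|
        ≤ K' * R / 𝓛 * |f x|⁻¹ + K / Lh * ρ x := by
      rw [abs_mul, abs_inv]
      have h1 : |Bd x * ρ x| * |𝓛 * f x|⁻¹ ≤ K' * R / 𝓛 * |f x|⁻¹ := by
        rw [habs𝓛f, mul_inv, abs_mul, abs_of_nonneg (hρnn x hx)]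
        calc |Bd x| * ρ x * (𝓛⁻¹ * |f x|⁻¹) ≤ K' * R * (𝓛⁻¹ * |f x|⁻¹) := by
              apply mul_le_mul_of_nonneg_right
                (mul_le_mul (hK' x hx) (hR x hx) (hρnn x hx) hK'nn) (by positivity)
          _ = K' * R / 𝓛 * |f x|⁻¹ := by ring
      have h2 : |B x * ρd x| * |𝓛 * f x|⁻¹ ≤ K / Lh * ρ x := by
        have h3 : |𝓛 * f x|⁻¹ ≤ Lh⁻¹ := inv_anti₀ hLh hfl
        rw [abs_mul]
        calc |B x| * |ρd x| * |𝓛 * f x|⁻¹ ≤ K * ρ x * Lh⁻¹ := by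
              apply mul_le_mul (mul_le_mul (hK x hx) (hρd_le x hx) (abs_nonneg _) hKnn) h3
                (inv_nonneg.2 (abs_nonneg _)) (mul_nonneg hKnn (hρnn x hx))
          _ = K / Lh * ρ x := by ring
      calc |Bd x * ρ x + B x * ρd x| * |𝓛 * f x|⁻¹
          ≤ (|Bd x * ρ x| + |B x * ρd x|) * |𝓛 * f x|⁻¹ :=
            mul_le_mul_of_nonneg_right (abs_add_le _ _) (inv_nonneg.2 (abs_nonneg _))
        _ = |Bd x * ρ x| * |𝓛 * f x|⁻¹ + |B x * ρd x| * |𝓛 * f x|⁻¹ := by ring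
        _ ≤ K' * R / 𝓛 * |f x|⁻¹ + K / Lh * ρ x := add_le_add h1 h2
    have t2 : |B x * ρ x * (-(𝓛 * fd x) / ((𝓛 * f x) ^ 2))|
        ≤ K * R * M2 / 𝓛 * ((f x) ^ 2)⁻¹ := by
      rw [abs_mul, abs_div, abs_neg, abs_mul, abs_mul, abs_of_pos h𝓛]
      have hsq : |(𝓛 * f x) ^ 2| = 𝓛 ^ 2 * (f x) ^ 2 := by
        rw [abs_of_nonneg (sq_nonneg _)]; ring
      rw [hsq, abs_of_nonneg (hρnn x hx)]
      have hnum : |B x| * ρ x * (𝓛 * |fd x|) ≤ K * R * (𝓛 * M2) := by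
        apply mul_le_mul (mul_le_mul (hK x hx) (hR x hx) (hρnn x hx) hKnn)
          (mul_le_mul_of_nonneg_left (hM2 x hx) h𝓛.le) (by positivity) (by positivity)
      calc |B x| * ρ x * (𝓛 * |fd x| / (𝓛 ^ 2 * (f x) ^ 2))
          = |B x| * ρ x * (𝓛 * |fd x|) / (𝓛 ^ 2 * (f x) ^ 2) := by ring
        _ ≤ K * R * (𝓛 * M2) / (𝓛 ^ 2 * (f x) ^ 2) := by
            have hd : (0:ℝ) < 𝓛 ^ 2 * (f x) ^ 2 := by
              have h9 : (0:ℝ) < (f x) ^ 2 :=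
                (sq_nonneg _).lt_of_ne (by simpa using (pow_ne_zero 2 hfx).symm)
              positivity
            gcongr
        _ = K * R * M2 / 𝓛 * ((f x) ^ 2)⁻¹ := by
            field_simp
    calc |ud x| ≤ |(Bd x * ρ x + B x * ρd x) * (𝓛 * f x)⁻¹|
        + |B x * ρ x * (-(𝓛 * fd x) / ((𝓛 * f x) ^ 2))| := abs_add_le _ _
      _ ≤ _ := by linarith [t1, t2]
  -- integral bound
  have hwc : ContinuousOn
      (fun x => HB * (K' * R / 𝓛 * |f x|⁻¹ + K / Lh * ρ x + K * R * M2 / 𝓛 * ((f x) ^ 2)⁻¹))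
      (Icc p q) := by
    apply continuousOn_const.mul
    apply ContinuousOn.add
    apply ContinuousOn.add
    · exact continuousOn_const.mul (((hcsub hfc).abs).inv₀
        (fun x hx => abs_ne_zero.2 (hfne x hx)))
    · exact continuousOn_const.mul (hcsub hρc)
    · exact continuousOn_const.mul (((hcsub hfc).pow 2).inv₀
        (fun x hx => pow_ne_zero 2 (hfne x hx)))
  have hintineq : (∫ x in p..q, |ud x * H (𝓛 * φ x)|)
      ≤ ∫ x in p..q,
        HB * (K' * R / 𝓛 * |f x|⁻¹ + K / Lh * ρ x + K * R * M2 / 𝓛 * ((f x) ^ 2)⁻¹) := by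
    apply integral_mono_on hpq (hudHint.abs) (hwc.intervalIntegrable_of_Icc hpq)
    intro x hx
    rw [abs_mul]
    calc |ud x| * |H (𝓛 * φ x)| ≤
        (K' * R / 𝓛 * |f x|⁻¹ + K / Lh * ρ x + K * R * M2 / 𝓛 * ((f x) ^ 2)⁻¹) * HB := by
          apply mul_le_mul (hudbound x hx) (hHB _) (abs_nonneg _)
          refine add_nonneg (add_nonneg ?_ ?_) ?_
          · exact mul_nonneg (div_nonneg (mul_nonneg hK'nn hRnn) h𝓛.le)
              (inv_nonneg.2 (abs_nonneg _))
          · exact mul_nonneg (div_nonneg hKnn hLh.le) (hρnn x hx)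
          · exact mul_nonneg (div_nonneg (mul_nonneg (mul_nonneg hKnn hRnn) hM2nn) h𝓛.le)
              (inv_nonneg.2 (sq_nonneg _))
      _ = _ := by ring
  have hint1 : IntervalIntegrable (fun x => |f x|⁻¹) volume p q :=
    (((hcsub hfc).abs).inv₀ (fun x hx => abs_ne_zero.2 (hfne x hx))).intervalIntegrable_of_Icc hpq
  have hint2 : IntervalIntegrable ρ volume p q := (hcsub hρc).intervalIntegrable_of_Icc hpq
  have hint3 : IntervalIntegrable (fun x => ((f x) ^ 2)⁻¹) volume p q :=
    (((hcsub hfc).pow 2).inv₀ (fun x hx => pow_ne_zero 2 (hfne x hx))).intervalIntegrable_of_Icc hpq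
  have hJ1nn : (0:ℝ) ≤ ∫ x in p..q, |f x|⁻¹ :=
    integral_nonneg hpq (fun x _ => inv_nonneg.2 (abs_nonneg _))
  have hJ2nn : (0:ℝ) ≤ ∫ x in p..q, ((f x) ^ 2)⁻¹ :=
    integral_nonneg hpq (fun x _ => inv_nonneg.2 (sq_nonneg _))
  have hρintnn : (0:ℝ) ≤ ∫ x in p..q, ρ x :=
    integral_nonneg hpq (fun x hx => hρnn x hx)
  have hcomp : (∫ x in p..q,
        HB * (K' * R / 𝓛 * |f x|⁻¹ + K / Lh * ρ x + K * R * M2 / 𝓛 * ((f x) ^ 2)⁻¹))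
      ≤ HB * (K' * R * J1 / 𝓛 + K / Lh + K * R * M2 * J2 / 𝓛) := by
    have hev : (∫ x in p..q,
        HB * (K' * R / 𝓛 * |f x|⁻¹ + K / Lh * ρ x + K * R * M2 / 𝓛 * ((f x) ^ 2)⁻¹))
        = HB * (K' * R / 𝓛 * (∫ x in p..q, |f x|⁻¹) + K / Lh * (∫ x in p..q, ρ x)
            + K * R * M2 / 𝓛 * (∫ x in p..q, ((f x) ^ 2)⁻¹)) := by
      rw [intervalIntegral.integral_const_mul]
      congr 1
      rw [integral_add (((hint1.const_mul _).add (hint2.const_mul _))) (hint3.const_mul _),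
        integral_add (hint1.const_mul _) (hint2.const_mul _),
        intervalIntegral.integral_const_mul, intervalIntegral.integral_const_mul, intervalIntegral.integral_const_mul]
    rw [hev]
    apply mul_le_mul_of_nonneg_left _ hHBnn
    have c1nn : 0 ≤ K' * R / 𝓛 := div_nonneg (mul_nonneg hK'nn hRnn) h𝓛.le
    have c2nn : 0 ≤ K / Lh := div_nonneg hKnn hLh.le
    have c3nn : 0 ≤ K * R * M2 / 𝓛 := div_nonneg (mul_nonneg (mul_nonneg hKnn hRnn) hM2nn) h𝓛.le
    have e1 : K' * R / 𝓛 * (∫ x in p..q, |f x|⁻¹) ≤ K' * R * J1 / 𝓛 := by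
      calc K' * R / 𝓛 * (∫ x in p..q, |f x|⁻¹) ≤ K' * R / 𝓛 * J1 :=
            mul_le_mul_of_nonneg_left hJ1 c1nn
        _ = K' * R * J1 / 𝓛 := by ring
    have e2 : K / Lh * (∫ x in p..q, ρ x) ≤ K / Lh := by
      calc K / Lh * (∫ x in p..q, ρ x) ≤ K / Lh * 1 := mul_le_mul_of_nonneg_left hρ1 c2nn
        _ = K / Lh := mul_one _
    have e3 : K * R * M2 / 𝓛 * (∫ x in p..q, ((f x) ^ 2)⁻¹) ≤ K * R * M2 * J2 / 𝓛 := by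
      calc K * R * M2 / 𝓛 * (∫ x in p..q, ((f x) ^ 2)⁻¹) ≤ K * R * M2 / 𝓛 * J2 :=
            mul_le_mul_of_nonneg_left hJ2 c3nn
        _ = K * R * M2 * J2 / 𝓛 := by ring
    linarith
  -- final assembly
  have habsint : |∫ x in p..q, ud x * H (𝓛 * φ x)| ≤ ∫ x in p..q, |ud x * H (𝓛 * φ x)| := by
    have := intervalIntegral.norm_integral_le_integral_norm
      (f := fun x => ud x * H (𝓛 * φ x)) (μ := volume) hpq
    simpa [Real.norm_eq_abs, abs_mul] using this
  have hGq := hGbound q (right_mem_Icc.2 hpq)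
  have hGp := hGbound p (left_mem_Icc.2 hpq)
  have tri : |G q - G p - ∫ x in p..q, ud x * H (𝓛 * φ x)|
      ≤ |G q| + |G p| + |∫ x in p..q, ud x * H (𝓛 * φ x)| := by
    have h1 := abs_add_le (G q - G p) (-(∫ x in p..q, ud x * H (𝓛 * φ x)))
    have h2 := abs_add_le (G q) (-(G p))
    rw [abs_neg] at h1 h2
    rw [← sub_eq_add_neg] at h1 h2
    linarith
  have expand : HB * (2 * (K * R / Lh) + K / Lh + K' * R * J1 / 𝓛 + K * R * M2 * J2 / 𝓛)
      = HB * (K * R / Lh) + HB * (K * R / Lh)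
        + HB * (K' * R * J1 / 𝓛 + K / Lh + K * R * M2 * J2 / 𝓛) := by ring
  rw [hmain, expand]
  have hlast : |∫ x in p..q, ud x * H (𝓛 * φ x)|
      ≤ HB * (K' * R * J1 / 𝓛 + K / Lh + K * R * M2 * J2 / 𝓛) :=
    le_trans habsint (le_trans hintineq hcomp)
  linarith

-- ∫ over [p,q] of (max s (c₀|x-x₀|))⁻¹ style bounds
lemma integral_inv_abs_le (f : ℝ → ℝ) (p q x₀ c₀ s T : ℝ)
    (hpq : p ≤ q) (hc₀ : 0 < c₀) (hs : 0 < s) (hT : s / c₀ ≤ T)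
    (hmem : Icc p q ⊆ Icc (x₀ - T) (x₀ + T))
    (hcf : ContinuousOn f (Icc p q))
    (hlow : ∀ x ∈ Icc p q, s ≤ |f x|)
    (hlin : ∀ x ∈ Icc p q, c₀ * |x - x₀| ≤ |f x|) :
    (∫ x in p..q, |f x|⁻¹) ≤ 2 / c₀ + 2 / c₀ * Real.log (T * c₀ / s) := by
  set w : ℝ → ℝ := fun x => (max s (c₀ * |x - x₀|))⁻¹ with hw
  have hwpos : ∀ x, 0 < max s (c₀ * |x - x₀|) := fun x => lt_max_iff.2 (Or.inl hs)
  have hwc : Continuous w := by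
    apply Continuous.inv₀
    · exact continuous_const.max (continuous_const.mul (continuous_id.sub continuous_const).abs)
    · exact fun x => (hwpos x).ne'
  have hwnn : ∀ x, 0 ≤ w x := fun x => inv_nonneg.2 (hwpos x).le
  have hfne : ∀ x ∈ Icc p q, f x ≠ 0 := fun x hx h0 => by
    have := hlow x hx; rw [h0, abs_zero] at this; linarith
  have step1 : (∫ x in p..q, |f x|⁻¹) ≤ ∫ x in p..q, w x := by
    apply integral_mono_on hpq
    · exact ((hcf.abs).inv₀ (fun x hx => abs_ne_zero.2 (hfne x hx))).intervalIntegrable_of_Icc hpq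
    · exact (hwc.continuousOn).intervalIntegrable_of_Icc hpq
    · intro x hx
      apply inv_anti₀ (hwpos x)
      exact max_le (hlow x hx) (hlin x hx)
  have hsub1 : x₀ - T ≤ p := (hmem (left_mem_Icc.2 hpq)).1
  have hsub2 : q ≤ x₀ + T := (hmem (right_mem_Icc.2 hpq)).2
  have step2 : (∫ x in p..q, w x) ≤ ∫ x in (x₀ - T)..(x₀ + T), w x := by
    apply integral_mono_interval hsub1 hpq hsub2
    · exact Filter.Eventually.of_forall (fun x => hwnn x)
    · exact (hwc.continuousOn).intervalIntegrable_of_Icc (by linarith [hT, div_pos hs hc₀])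
  set w₀ : ℝ := s / c₀ with hw₀
  have hw₀pos : 0 < w₀ := div_pos hs hc₀
  have hord1 : x₀ - T ≤ x₀ - w₀ := by linarith
  have hord2 : x₀ - w₀ ≤ x₀ + w₀ := by linarith
  have hord3 : x₀ + w₀ ≤ x₀ + T := by linarith
  have hint : ∀ u v : ℝ, IntervalIntegrable w volume u v :=
    fun u v => hwc.intervalIntegrable u v
  have split : (∫ x in (x₀ - T)..(x₀ + T), w x)
      = (∫ x in (x₀ - T)..(x₀ - w₀), w x) + (∫ x in (x₀ - w₀)..(x₀ + w₀), w x)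
        + ∫ x in (x₀ + w₀)..(x₀ + T), w x := by
    rw [integral_add_adjacent_intervals (hint _ _) (hint _ _),
      integral_add_adjacent_intervals (hint _ _) (hint _ _)]
  -- middle piece
  have hmid : (∫ x in (x₀ - w₀)..(x₀ + w₀), w x) ≤ 2 / c₀ := by
    have h1 : (∫ x in (x₀ - w₀)..(x₀ + w₀), w x) ≤ ∫ _x in (x₀ - w₀)..(x₀ + w₀), s⁻¹ := by
      apply integral_mono_on hord2 (hint _ _)
        (intervalIntegrable_const)
      intro x _
      exact inv_anti₀ hs (le_max_left _ _)
    rw [intervalIntegral.integral_const, smul_eq_mul] at h1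
    have e : (x₀ + w₀ - (x₀ - w₀)) * s⁻¹ = 2 / c₀ := by
      have e2 : x₀ + w₀ - (x₀ - w₀) = 2 * w₀ := by ring
      rw [e2, hw₀]
      field_simp
    linarith
  -- right piece
  have hlog : (∫ x in w₀..T, (c₀ * x)⁻¹ ) = c₀⁻¹ * Real.log (T * c₀ / s) := by
    have h1 : ∀ x : ℝ, (c₀ * x)⁻¹ = c₀⁻¹ * x⁻¹ := fun x => by rw [mul_inv]
    simp only [h1]
    rw [intervalIntegral.integral_const_mul, integral_inv (by
      rw [Set.uIcc_of_le (by linarith)]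
      intro h0
      exact absurd (h0.1) (by linarith))]
    congr 1
    rw [hw₀]
    field_simp
  have hright : (∫ x in (x₀ + w₀)..(x₀ + T), w x) ≤ c₀⁻¹ * Real.log (T * c₀ / s) := by
    have h1 : (∫ x in (x₀ + w₀)..(x₀ + T), w x) ≤ ∫ x in (x₀ + w₀)..(x₀ + T), (c₀ * (x - x₀))⁻¹ := by
      apply integral_mono_on (by linarith) (hint _ _)
      · apply ContinuousOn.intervalIntegrable_of_Icc (by linarith)
        apply ContinuousOn.inv₀
        · exact (continuousOn_const.mul ((continuous_id.sub continuous_const).continuousOn))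
        · intro x hx
          have : 0 < x - x₀ := by
            rcases hx with ⟨h2, h3⟩; linarith
          positivity
      · intro x hx
        rcases hx with ⟨h2, h3⟩
        have h4 : 0 < x - x₀ := by linarith
        apply inv_anti₀ (by positivity)
        calc c₀ * (x - x₀) = c₀ * |x - x₀| := by rw [abs_of_pos h4]
          _ ≤ max s (c₀ * |x - x₀|) := le_max_right _ _
    have h2 : (∫ x in (x₀ + w₀)..(x₀ + T), (c₀ * (x - x₀))⁻¹) = ∫ x in w₀..T, (c₀ * x)⁻¹ := by
      have := intervalIntegral.integral_comp_sub_right (a := x₀ + w₀) (b := x₀ + T)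
        (fun x => (c₀ * x)⁻¹) x₀
      simpa using this
    rw [h2, hlog] at h1
    exact h1
  -- left piece
  have hleft : (∫ x in (x₀ - T)..(x₀ - w₀), w x) ≤ c₀⁻¹ * Real.log (T * c₀ / s) := by
    have h1 : (∫ x in (x₀ - T)..(x₀ - w₀), w x) ≤ ∫ x in (x₀ - T)..(x₀ - w₀), (c₀ * (x₀ - x))⁻¹ := by
      apply integral_mono_on (by linarith) (hint _ _)
      · apply ContinuousOn.intervalIntegrable_of_Icc (by linarith)
        apply ContinuousOn.inv₀
        · exact (continuousOn_const.mul ((continuous_const.sub continuous_id).continuousOn))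
        · intro x hx
          have : 0 < x₀ - x := by rcases hx with ⟨h2, h3⟩; linarith
          positivity
      · intro x hx
        rcases hx with ⟨h2, h3⟩
        have h4 : 0 < x₀ - x := by linarith
        apply inv_anti₀ (by positivity)
        calc c₀ * (x₀ - x) = c₀ * |x - x₀| := by rw [abs_sub_comm, abs_of_pos h4]
          _ ≤ max s (c₀ * |x - x₀|) := le_max_right _ _
    have h2 : (∫ x in (x₀ - T)..(x₀ - w₀), (c₀ * (x₀ - x))⁻¹) = ∫ x in w₀..T, (c₀ * x)⁻¹ := by
      have := intervalIntegral.integral_comp_sub_left (a := x₀ - T) (b := x₀ - w₀)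
        (fun x => (c₀ * x)⁻¹) x₀
      simpa using this
    rw [h2, hlog] at h1
    exact h1
  have : (∫ x in (x₀ - T)..(x₀ + T), w x) ≤ 2 / c₀ + 2 / c₀ * Real.log (T * c₀ / s) := by
    rw [split]
    have : c₀⁻¹ * Real.log (T * c₀ / s) + c₀⁻¹ * Real.log (T * c₀ / s)
        = 2 / c₀ * Real.log (T * c₀ / s) := by ring
    linarith
  linarith [step1, step2]

lemma integral_inv_sq_le (f : ℝ → ℝ) (p q x₀ c₀ s T : ℝ)
    (hpq : p ≤ q) (hc₀ : 0 < c₀) (hs : 0 < s) (hT : s / c₀ ≤ T)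
    (hmem : Icc p q ⊆ Icc (x₀ - T) (x₀ + T))
    (hcf : ContinuousOn f (Icc p q))
    (hlow : ∀ x ∈ Icc p q, s ≤ |f x|)
    (hlin : ∀ x ∈ Icc p q, c₀ * |x - x₀| ≤ |f x|) :
    (∫ x in p..q, ((f x) ^ 2)⁻¹) ≤ 4 / (c₀ * s) := by
  set w : ℝ → ℝ := fun x => ((max s (c₀ * |x - x₀|)) ^ 2)⁻¹ with hw
  have hwpos : ∀ x, 0 < max s (c₀ * |x - x₀|) := fun x => lt_max_iff.2 (Or.inl hs)
  have hwc : Continuous w := by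
    apply Continuous.inv₀
    · exact (continuous_const.max (continuous_const.mul
        (continuous_id.sub continuous_const).abs)).pow 2
    · exact fun x => pow_ne_zero 2 (hwpos x).ne'
  have hwnn : ∀ x, 0 ≤ w x := fun x => inv_nonneg.2 (sq_nonneg _)
  have hfne : ∀ x ∈ Icc p q, f x ≠ 0 := fun x hx h0 => by
    have := hlow x hx; rw [h0, abs_zero] at this; linarith
  have step1 : (∫ x in p..q, ((f x) ^ 2)⁻¹) ≤ ∫ x in p..q, w x := by
    apply integral_mono_on hpq
    · exact ((hcf.pow 2).inv₀
        (fun x hx => pow_ne_zero 2 (hfne x hx))).intervalIntegrable_of_Icc hpq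
    · exact (hwc.continuousOn).intervalIntegrable_of_Icc hpq
    · intro x hx
      apply inv_anti₀ (by positivity)
      have h1 : max s (c₀ * |x - x₀|) ≤ |f x| := max_le (hlow x hx) (hlin x hx)
      calc (max s (c₀ * |x - x₀|)) ^ 2 ≤ |f x| ^ 2 := by
            apply pow_le_pow_left₀ (hwpos x).le h1
        _ = (f x) ^ 2 := sq_abs _
  have hsub1 : x₀ - T ≤ p := (hmem (left_mem_Icc.2 hpq)).1
  have hsub2 : q ≤ x₀ + T := (hmem (right_mem_Icc.2 hpq)).2
  have step2 : (∫ x in p..q, w x) ≤ ∫ x in (x₀ - T)..(x₀ + T), w x := by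
    apply integral_mono_interval hsub1 hpq hsub2
    · exact Filter.Eventually.of_forall (fun x => hwnn x)
    · exact (hwc.continuousOn).intervalIntegrable_of_Icc (by linarith [hT, div_pos hs hc₀])
  set w₀ : ℝ := s / c₀ with hw₀
  have hw₀pos : 0 < w₀ := div_pos hs hc₀
  have hord1 : x₀ - T ≤ x₀ - w₀ := by linarith
  have hord2 : x₀ - w₀ ≤ x₀ + w₀ := by linarith
  have hord3 : x₀ + w₀ ≤ x₀ + T := by linarith
  have hint : ∀ u v : ℝ, IntervalIntegrable w volume u v :=
    fun u v => hwc.intervalIntegrable u v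
  have split : (∫ x in (x₀ - T)..(x₀ + T), w x)
      = (∫ x in (x₀ - T)..(x₀ - w₀), w x) + (∫ x in (x₀ - w₀)..(x₀ + w₀), w x)
        + ∫ x in (x₀ + w₀)..(x₀ + T), w x := by
    rw [integral_add_adjacent_intervals (hint _ _) (hint _ _),
      integral_add_adjacent_intervals (hint _ _) (hint _ _)]
  have hmid : (∫ x in (x₀ - w₀)..(x₀ + w₀), w x) ≤ 2 / (c₀ * s) := by
    have h1 : (∫ x in (x₀ - w₀)..(x₀ + w₀), w x) ≤ ∫ _x in (x₀ - w₀)..(x₀ + w₀), (s ^ 2)⁻¹ := by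
      apply integral_mono_on hord2 (hint _ _) intervalIntegrable_const
      intro x _
      apply inv_anti₀ (by positivity)
      apply pow_le_pow_left₀ hs.le (le_max_left _ _)
    rw [intervalIntegral.integral_const, smul_eq_mul] at h1
    have e : (x₀ + w₀ - (x₀ - w₀)) * (s ^ 2)⁻¹ = 2 / (c₀ * s) := by
      have e2 : x₀ + w₀ - (x₀ - w₀) = 2 * w₀ := by ring
      rw [e2, hw₀]
      field_simp
    linarith
  -- key FTC computation
  have hftc : (∫ x in w₀..T, ((c₀ * x) ^ 2)⁻¹) ≤ 1 / (c₀ * s) := by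
    have hder : ∀ x ∈ Set.uIcc w₀ T, HasDerivAt (fun y => -(c₀ ^ 2 * y)⁻¹) (((c₀ * x) ^ 2)⁻¹) x := by
      intro x hx
      rw [Set.uIcc_of_le (by linarith)] at hx
      have hxpos : 0 < x := lt_of_lt_of_le hw₀pos hx.1
      have h1 : HasDerivAt (fun y : ℝ => c₀ ^ 2 * y) (c₀ ^ 2) x := by
        simpa using (hasDerivAt_id x).const_mul (c₀ ^ 2)
      have h2 : HasDerivAt (fun y => -(c₀ ^ 2 * y)⁻¹) (-(-(c₀ ^ 2) / (c₀ ^ 2 * x) ^ 2)) x :=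
        (h1.inv (by positivity)).neg
      convert h2 using 1
      field_simp
    have hic : IntervalIntegrable (fun x => ((c₀ * x) ^ 2)⁻¹) volume w₀ T := by
      apply ContinuousOn.intervalIntegrable
      rw [Set.uIcc_of_le (by linarith)]
      apply ContinuousOn.inv₀
      · exact ((continuous_const.mul continuous_id).pow 2).continuousOn
      · intro x hx
        have hxpos : 0 < x := lt_of_lt_of_le hw₀pos hx.1
        positivity
    have := intervalIntegral.integral_eq_sub_of_hasDerivAt hder hic
    rw [this]
    have hTpos : 0 < T := lt_of_lt_of_le hw₀pos hT
    have e : -(c₀ ^ 2 * T)⁻¹ - -(c₀ ^ 2 * w₀)⁻¹ = (c₀ ^ 2 * w₀)⁻¹ - (c₀ ^ 2 * T)⁻¹ := by ring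
    rw [e, hw₀]
    have e2 : (c₀ ^ 2 * (s / c₀))⁻¹ = 1 / (c₀ * s) := by
      field_simp
    rw [e2]
    have : 0 ≤ (c₀ ^ 2 * T)⁻¹ := by positivity
    linarith
  have hright : (∫ x in (x₀ + w₀)..(x₀ + T), w x) ≤ 1 / (c₀ * s) := by
    have h1 : (∫ x in (x₀ + w₀)..(x₀ + T), w x)
        ≤ ∫ x in (x₀ + w₀)..(x₀ + T), ((c₀ * (x - x₀)) ^ 2)⁻¹ := by
      apply integral_mono_on (by linarith) (hint _ _)
      · apply ContinuousOn.intervalIntegrable_of_Icc (by linarith)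
        apply ContinuousOn.inv₀
        · exact ((continuousOn_const.mul
            ((continuous_id.sub continuous_const).continuousOn)).pow 2)
        · intro x hx
          have : 0 < x - x₀ := by rcases hx with ⟨h2, h3⟩; linarith
          positivity
      · intro x hx
        rcases hx with ⟨h2, h3⟩
        have h4 : 0 < x - x₀ := by linarith
        apply inv_anti₀ (by positivity)
        have h5 : c₀ * (x - x₀) ≤ max s (c₀ * |x - x₀|) := by
          have e : c₀ * |x - x₀| = c₀ * (x - x₀) := by rw [abs_of_pos h4]
          exact e ▸ le_max_right s (c₀ * |x - x₀|)
        exact pow_le_pow_left₀ (mul_nonneg hc₀.le h4.le) h5 2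
    have h2 : (∫ x in (x₀ + w₀)..(x₀ + T), ((c₀ * (x - x₀)) ^ 2)⁻¹)
        = ∫ x in w₀..T, ((c₀ * x) ^ 2)⁻¹ := by
      have := intervalIntegral.integral_comp_sub_right (a := x₀ + w₀) (b := x₀ + T)
        (fun x => ((c₀ * x) ^ 2)⁻¹) x₀
      simpa using this
    rw [h2] at h1
    linarith [hftc]
  have hleft : (∫ x in (x₀ - T)..(x₀ - w₀), w x) ≤ 1 / (c₀ * s) := by
    have h1 : (∫ x in (x₀ - T)..(x₀ - w₀), w x)
        ≤ ∫ x in (x₀ - T)..(x₀ - w₀), ((c₀ * (x₀ - x)) ^ 2)⁻¹ := by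
      apply integral_mono_on (by linarith) (hint _ _)
      · apply ContinuousOn.intervalIntegrable_of_Icc (by linarith)
        apply ContinuousOn.inv₀
        · exact ((continuousOn_const.mul
            ((continuous_const.sub continuous_id).continuousOn)).pow 2)
        · intro x hx
          have : 0 < x₀ - x := by rcases hx with ⟨h2, h3⟩; linarith
          positivity
      · intro x hx
        rcases hx with ⟨h2, h3⟩
        have h4 : 0 < x₀ - x := by linarith
        apply inv_anti₀ (by positivity)
        have h5 : c₀ * (x₀ - x) ≤ max s (c₀ * |x - x₀|) := by
          have e : c₀ * |x - x₀| = c₀ * (x₀ - x) := by rw [abs_sub_comm, abs_of_pos h4]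
          exact e ▸ le_max_right s (c₀ * |x - x₀|)
        exact pow_le_pow_left₀ (mul_nonneg hc₀.le h4.le) h5 2
    have h2 : (∫ x in (x₀ - T)..(x₀ - w₀), ((c₀ * (x₀ - x)) ^ 2)⁻¹)
        = ∫ x in w₀..T, ((c₀ * x) ^ 2)⁻¹ := by
      have := intervalIntegral.integral_comp_sub_left (a := x₀ - T) (b := x₀ - w₀)
        (fun x => ((c₀ * x) ^ 2)⁻¹) x₀
      simpa using this
    rw [h2] at h1
    linarith [hftc]
  have e4 : (2:ℝ) / (c₀ * s) + 1 / (c₀ * s) + 1 / (c₀ * s) = 4 / (c₀ * s) := by ring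
  rw [split] at step2
  linarith [step1, step2, hmid, hright, hleft]

set_option maxHeartbeats 1000000 in
/-- Oscillatory-integral equidistribution estimate (Lemma `p_auxBaseStep`):
for `Θ = 𝓛·φ mod 2π` with `φ` having at most one non-degenerate critical point and
`sup|φ'| ≤ 1`, and `ρ` a regular density on a standard interval, the integral of
`B·(𝒜 ∘ Θ)·ρ` is controlled in terms of `ℙ(D)`, `𝓛̂⁻¹` and `𝓛⁻¹ log 𝓛`. -/
theorem oscillatory_equidistribution_estimate
    (δ a b : ℝ) (hδ0 : 0 < δ) (hδπ : δ < Real.pi / 4)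
    (hI1 : δ / 4 < b - a) (hI2 : b - a < δ)
    (φ : ℝ → ℝ) (hφ : ContDiffOn ℝ (⊤ : ℕ∞) φ (Icc a b))
    (hφcrit : ∀ x ∈ Icc a b, ∀ y ∈ Icc a b,
      dIcc a b φ x = 0 → dIcc a b φ y = 0 → x = y)
    (hφnondeg : ∀ x ∈ Icc a b, dIcc a b φ x = 0 → dIcc a b (dIcc a b φ) x ≠ 0)
    (hφnorm : ∀ x ∈ Icc a b, |dIcc a b φ x| ≤ 1) :
    ∃ L₀ C : ℝ, 0 < L₀ ∧ 0 < C ∧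
      ∀ 𝓛 : ℝ, L₀ ≤ 𝓛 →
      ∀ ρ : ℝ → ℝ, ContDiffOn ℝ (⊤ : ℕ∞) ρ (Icc a b) → (∀ x ∈ Icc a b, 0 < ρ x) →
        (∫ x in Icc a b, ρ x) = 1 →
        (∀ x ∈ Icc a b, |dIcc a b ρ x / ρ x| < 1) →
      ∀ B : ℝ → ℝ, ContDiffOn ℝ 1 B (Icc a b) →
      ∀ 𝒜 : ℝ → ℝ, Continuous 𝒜 → Function.Periodic 𝒜 (2 * Real.pi) →
        (∫ θ in (0:ℝ)..(2 * Real.pi), 𝒜 θ) = 0 →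
        let D : Set ℝ := {x ∈ Icc a b | |𝓛 * dIcc a b φ x| < Real.sqrt 𝓛}
        let Lhat : ℝ := sInf ((fun x => |𝓛 * dIcc a b φ x|) '' (Icc a b \ D))
        |∫ x in Icc a b, B x * 𝒜 (𝓛 * φ x) * ρ x| ≤
          supAbsOn 𝒜 (Icc 0 (2 * Real.pi)) *
            (supAbsOn B (Icc a b) * ((∫ x in D, ρ x) + C / Lhat)
              + supAbsOn (dIcc a b B) (Icc a b \ D) * (C * 𝓛⁻¹ * Real.log 𝓛)) := by
  have hab : a < b := by nlinarith
  have hπ1 : Real.pi / 4 < 1 := by nlinarith [Real.pi_lt_d2]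
  have hδ1 : δ < 1 := lt_trans hδπ hπ1
  have hU : UniqueDiffOn ℝ (Icc a b) := uniqueDiffOn_Icc hab
  set f : ℝ → ℝ := dIcc a b φ with hfdef
  set fd : ℝ → ℝ := dIcc a b f with hfddef
  have hφcont : ContinuousOn φ (Icc a b) := hφ.continuousOn
  have hfC : ContDiffOn ℝ (⊤ : ℕ∞) f (Icc a b) := hφ.derivWithin hU (by simp)
  have hfcont : ContinuousOn f (Icc a b) := hfC.continuousOn
  have hfdc : ContinuousOn fd (Icc a b) := hfC.continuousOn_derivWithin hU (by simp)
  have hinner : ∀ (g : ℝ → ℝ), ContDiffOn ℝ 1 g (Icc a b) →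
      ∀ x ∈ Ioo a b, HasDerivAt g (dIcc a b g x) x := by
    intro g hg x hx
    have hdiff : DifferentiableWithinAt ℝ g (Icc a b) x :=
      (hg.differentiableOn one_ne_zero) x (Ioo_subset_Icc_self hx)
    exact hdiff.hasDerivWithinAt.hasDerivAt (Icc_mem_nhds hx.1 hx.2)
  have hφd : ∀ x ∈ Ioo a b, HasDerivAt φ (f x) x := hinner φ (hφ.of_le (by simp))
  have hfd : ∀ x ∈ Ioo a b, HasDerivAt f (fd x) x := hinner f (hfC.of_le (by simp))
  obtain ⟨M2', hM2'⟩ := (isCompact_Icc.image_of_continuousOn hfdc.abs).bddAbove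
  set M2 : ℝ := max M2' 0 with hM2def
  have hM2 : ∀ x ∈ Icc a b, |fd x| ≤ M2 :=
    fun x hx => le_trans (hM2' ⟨x, hx, rfl⟩) (le_max_left _ _)
  have hM2nn : 0 ≤ M2 := le_max_right _ _
  set R : ℝ := 4 * Real.exp 1 / δ with hRdef
  have hRpos : 0 < R := by positivity
  by_cases hcrit : ∃ x₀ ∈ Icc a b, f x₀ = 0
  · -- CASE B : there is a critical point x₀
    obtain ⟨x₀, hx₀I, hfx₀⟩ := hcrit
    have hfdx₀ : fd x₀ ≠ 0 := hφnondeg x₀ hx₀I hfx₀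
    set σ : ℝ := if 0 < fd x₀ then 1 else -1 with hσdef
    set g : ℝ → ℝ := fun x => σ * f x with hgdef
    set gd : ℝ → ℝ := fun x => σ * fd x with hgddef
    have hσabs : |σ| = 1 := by rw [hσdef]; split_ifs <;> simp
    have habsg : ∀ x, |g x| = |f x| := by
      intro x; rw [hgdef]; simp only; rw [abs_mul, hσabs, one_mul]
    have hgd₀ : 0 < gd x₀ := by
      rw [hgddef, hσdef]
      simp only
      split_ifs with h
      · simpa using h
      · have h2 : fd x₀ < 0 := lt_of_le_of_ne (not_lt.1 h) hfdx₀
        nlinarith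
    have hgc : ContinuousOn g (Icc a b) := continuousOn_const.mul hfcont
    have hgdc : ContinuousOn gd (Icc a b) := continuousOn_const.mul hfdc
    have hgder : ∀ x ∈ Ioo a b, HasDerivAt g (gd x) x := fun x hx => (hfd x hx).const_mul σ
    set κ : ℝ := gd x₀ / 2 with hκdef
    have hκ : 0 < κ := by rw [hκdef]; positivity
    have hgdcw : ContinuousWithinAt gd (Icc a b) x₀ := hgdc x₀ hx₀I
    obtain ⟨η₂, hη₂, hηprop⟩ := Metric.continuousWithinAt_iff.1 hgdcw κ hκ
    set η : ℝ := η₂ / 2 with hηdef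
    have hηpos : 0 < η := by rw [hηdef]; positivity
    have hgdU : ∀ y ∈ Icc a b, |y - x₀| ≤ η → κ ≤ gd y := by
      intro y hy hyd
      have h1 : dist y x₀ < η₂ := by
        rw [Real.dist_eq]
        have : η < η₂ := by rw [hηdef]; linarith
        linarith
      have h2 := hηprop hy h1
      rw [Real.dist_eq] at h2
      have h3 := abs_lt.1 h2
      have h4 : gd x₀ - κ = κ := by rw [hκdef]; ring
      linarith [h3.1]
    set p₁ : ℝ := max a (x₀ - η) with hp₁
    set p₂ : ℝ := min b (x₀ + η) with hp₂
    set U : Set ℝ := Icc p₁ p₂ with hUdef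
    have hUsub : U ⊆ Icc a b := Icc_subset_Icc (le_max_left _ _) (min_le_left _ _)
    have hx₀U : x₀ ∈ U := ⟨max_le hx₀I.1 (by linarith), le_min hx₀I.2 (by linarith)⟩
    have hUprop : ∀ y ∈ U, y ∈ Icc a b ∧ |y - x₀| ≤ η := by
      intro y hy
      refine ⟨hUsub hy, ?_⟩
      rcases hy with ⟨h1, h2⟩
      rw [abs_le]
      constructor
      · have := le_trans (le_max_right a (x₀ - η)) h1; linarith
      · have := le_trans h2 (min_le_right b (x₀ + η)); linarith
    have hgdUκ : ∀ y ∈ U, κ ≤ gd y := fun y hy => hgdU y (hUprop y hy).1 (hUprop y hy).2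
    have hmono : StrictMonoOn g U := by
      apply strictMonoOn_of_deriv_pos (convex_Icc _ _) (hgc.mono hUsub)
      intro x hx
      rw [interior_Icc] at hx
      have hxIoo : x ∈ Ioo a b :=
        ⟨lt_of_le_of_lt (le_max_left _ _) hx.1, lt_of_lt_of_le hx.2 (min_le_left _ _)⟩
      rw [(hgder x hxIoo).deriv]
      exact lt_of_lt_of_le hκ (hgdUκ x (Ioo_subset_Icc_self hx))
    have hgx₀ : g x₀ = 0 := by rw [hgdef]; simp [hfx₀]
    have hlinU : ∀ x ∈ U, κ * |x - x₀| ≤ |f x| := by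
      intro x hx
      rcases lt_trichotomy x x₀ with hlt | heq | hgt
      · have hIccsub : Icc x x₀ ⊆ U := Icc_subset_Icc hx.1 hx₀U.2
        obtain ⟨ξ, hξ, hslope⟩ := exists_hasDerivAt_eq_slope g gd hlt
          (hgc.mono (hIccsub.trans hUsub))
          (fun y hy => hgder y ⟨lt_of_le_of_lt (hUsub hx).1 hy.1, lt_of_lt_of_le hy.2 hx₀I.2⟩)
        have hξU : ξ ∈ U := hIccsub (Ioo_subset_Icc_self hξ)
        have hκξ := hgdUκ ξ hξU
        have hne : x₀ - x ≠ 0 := by intro h0; linarith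
        have hgx : g x₀ - g x = gd ξ * (x₀ - x) := by
          rw [hslope]; field_simp [hne]
        have h5 : κ * (x₀ - x) ≤ -g x := by
          have h6 := mul_le_mul_of_nonneg_right hκξ (by linarith : (0:ℝ) ≤ x₀ - x)
          rw [hgx₀] at hgx
          linarith
        have habs : |x - x₀| = x₀ - x := by
          rw [abs_sub_comm]; exact abs_of_pos (by linarith)
        rw [habs, ← habsg]
        calc κ * (x₀ - x) ≤ -g x := h5
          _ ≤ |g x| := neg_le_abs _
      · rw [heq]
        simp [hfx₀]
      · have hIccsub : Icc x₀ x ⊆ U := Icc_subset_Icc hx₀U.1 hx.2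
        obtain ⟨ξ, hξ, hslope⟩ := exists_hasDerivAt_eq_slope g gd hgt
          (hgc.mono (hIccsub.trans hUsub))
          (fun y hy => hgder y ⟨lt_of_le_of_lt hx₀I.1 hy.1, lt_of_lt_of_le hy.2 (hUsub hx).2⟩)
        have hξU : ξ ∈ U := hIccsub (Ioo_subset_Icc_self hξ)
        have hκξ := hgdUκ ξ hξU
        have hne : x - x₀ ≠ 0 := sub_ne_zero.2 (ne_of_gt hgt)
        have hgx : g x - g x₀ = gd ξ * (x - x₀) := by
          rw [hslope]; field_simp [hne]
        have h5 : κ * (x - x₀) ≤ g x := by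
          have h6 := mul_le_mul_of_nonneg_right hκξ (by linarith : (0:ℝ) ≤ x - x₀)
          rw [hgx₀] at hgx
          linarith
        have habs : |x - x₀| = x - x₀ := abs_of_pos (by linarith)
        rw [habs, ← habsg]
        calc κ * (x - x₀) ≤ g x := h5
          _ ≤ |g x| := le_abs_self _
    set V : Set ℝ := Icc a b \ Ioo (x₀ - η) (x₀ + η) with hVdef
    have hm₁ex : ∃ m₁ : ℝ, 0 < m₁ ∧ ∀ x ∈ V, m₁ ≤ |f x| := by
      rcases V.eq_empty_or_nonempty with hV | hV
      · exact ⟨1, one_pos, fun x hx => by rw [hV] at hx; exact absurd hx (notMem_empty x)⟩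
      · have hVcomp : IsCompact V := isCompact_Icc.diff isOpen_Ioo
        obtain ⟨xv, hxvV, hxvmin⟩ := hVcomp.exists_isMinOn hV (hfcont.abs.mono diff_subset)
        refine ⟨|f xv|, ?_, fun x hx => hxvmin hx⟩
        rw [abs_pos]
        intro h0
        have hxveq : xv = x₀ := hφcrit xv (diff_subset hxvV) x₀ hx₀I h0 hfx₀
        have hx₀mem : x₀ ∈ Ioo (x₀ - η) (x₀ + η) := ⟨by linarith, by linarith⟩
        rw [hxveq] at hxvV
        exact hxvV.2 hx₀mem
    obtain ⟨m₁, hm₁pos, hm₁⟩ := hm₁ex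
    set c₀ : ℝ := min κ (m₁ / δ) with hc₀def
    have hc₀ : 0 < c₀ := lt_min hκ (by positivity)
    have hlinI : ∀ x ∈ Icc a b, c₀ * |x - x₀| ≤ |f x| := by
      intro x hx
      by_cases hxU : x ∈ Ioo (x₀ - η) (x₀ + η)
      · have hxU' : x ∈ U := ⟨max_le hx.1 hxU.1.le, le_min hx.2 hxU.2.le⟩
        calc c₀ * |x - x₀| ≤ κ * |x - x₀| :=
            mul_le_mul_of_nonneg_right (min_le_left _ _) (abs_nonneg _)
          _ ≤ |f x| := hlinU x hxU'
      · have hxV : x ∈ V := ⟨hx, hxU⟩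
        have h1 : |x - x₀| ≤ δ := by
          rw [abs_le]; rcases hx with ⟨e1, e2⟩; rcases hx₀I with ⟨e3, e4⟩
          constructor <;> linarith
        calc c₀ * |x - x₀| ≤ (m₁ / δ) * δ :=
            mul_le_mul (min_le_right _ _) h1 (abs_nonneg _) (by positivity)
          _ = m₁ := by field_simp
          _ ≤ |f x| := hm₁ x hxV
    set c₁ : ℝ := 2 * R + 1 + 4 * R * M2 / c₀ with hc₁def
    set c₂ : ℝ := 4 * R / c₀ with hc₂def
    have hc₁pos : 0 < c₁ := by rw [hc₁def]; positivity
    have hc₂pos : 0 < c₂ := by rw [hc₂def]; positivity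
    refine ⟨Real.exp 1 + ((κ * η)⁻¹) ^ 2 + (m₁⁻¹) ^ 2 + ((c₀ * δ)⁻¹) ^ 2 + (δ * c₀) ^ 2 + 1,
      4 * π * (c₁ + c₂) + 1, by positivity, by positivity, ?_⟩
    set C : ℝ := 4 * π * (c₁ + c₂) + 1 with hCdef
    have hπpos := Real.pi_pos
    have hCpos : 0 < C := by rw [hCdef]; positivity
    intro 𝓛 h𝓛 ρ hρ hρpos hρint hρreg B hB 𝒜 hA hper hmean
    intro D Lhat
    have hD_def : D = {x | x ∈ Icc a b ∧ |𝓛 * f x| < Real.sqrt 𝓛} := rfl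
    have hLhat_def : Lhat = sInf ((fun x => |𝓛 * f x|) '' (Icc a b \ D)) := rfl
    have h𝓛pos : 0 < 𝓛 := lt_of_lt_of_le (by positivity) h𝓛
    have hexp1 : (2:ℝ) ≤ Real.exp 1 := by have := Real.add_one_le_exp (1:ℝ); linarith
    have hsqauxs : (0:ℝ) ≤ ((κ * η)⁻¹) ^ 2 + (m₁⁻¹) ^ 2 + ((c₀ * δ)⁻¹) ^ 2 + (δ * c₀) ^ 2 := by
      positivity
    have hexppos := Real.exp_pos (1:ℝ)
    have h𝓛1 : 1 ≤ 𝓛 := by linarith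
    have hsq𝓛 : 0 < Real.sqrt 𝓛 := Real.sqrt_pos.2 h𝓛pos
    have hss : Real.sqrt 𝓛 * Real.sqrt 𝓛 = 𝓛 := Real.mul_self_sqrt h𝓛pos.le
    have hlog1 : 1 ≤ Real.log 𝓛 := by
      rw [Real.le_log_iff_exp_le h𝓛pos]
      linarith
    have hsqrtge : ∀ z : ℝ, 0 < z → z ^ 2 ≤ 𝓛 → z ≤ Real.sqrt 𝓛 := by
      intro z hz h
      have := Real.sqrt_le_sqrt h
      rwa [Real.sqrt_sq hz.le] at this
    set t : ℝ := (Real.sqrt 𝓛)⁻¹ with htdef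
    have ht : 0 < t := by rw [htdef]; positivity
    have hinvle : ∀ z : ℝ, 0 < z → z⁻¹ ≤ Real.sqrt 𝓛 → t ≤ z := by
      intro z hz h
      rw [htdef]
      calc (Real.sqrt 𝓛)⁻¹ ≤ (z⁻¹)⁻¹ := inv_anti₀ (by positivity) h
        _ = z := inv_inv z
    have ht1 : t ≤ κ * η := hinvle _ (by positivity)
      (hsqrtge _ (by positivity) (by linarith [sq_nonneg (m₁⁻¹), sq_nonneg ((c₀*δ)⁻¹), sq_nonneg (δ*c₀)]))
    have ht2 : t ≤ m₁ := hinvle _ hm₁pos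
      (hsqrtge _ (by positivity) (by linarith [sq_nonneg ((κ*η)⁻¹), sq_nonneg ((c₀*δ)⁻¹), sq_nonneg (δ*c₀)]))
    have ht3 : t ≤ c₀ * δ := hinvle _ (by positivity)
      (hsqrtge _ (by positivity) (by linarith [sq_nonneg ((κ*η)⁻¹), sq_nonneg (m₁⁻¹), sq_nonneg (δ*c₀)]))
    have ht4 : δ * c₀ * Real.sqrt 𝓛 ≤ 𝓛 := by
      have h1 : δ * c₀ ≤ Real.sqrt 𝓛 := hsqrtge _ (by positivity)
        (by linarith [sq_nonneg ((κ*η)⁻¹), sq_nonneg (m₁⁻¹), sq_nonneg ((c₀*δ)⁻¹)])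
      calc δ * c₀ * Real.sqrt 𝓛 ≤ Real.sqrt 𝓛 * Real.sqrt 𝓛 :=
          mul_le_mul_of_nonneg_right h1 hsq𝓛.le
        _ = 𝓛 := hss
    have h𝓛t : 𝓛 * t = Real.sqrt 𝓛 := by
      rw [htdef, ← hss]; field_simp; rw [Real.sqrt_sq hsq𝓛.le]
    have hDmem : ∀ x, x ∈ D ↔ x ∈ Icc a b ∧ |f x| < t := by
      intro x
      rw [hD_def]
      simp only [mem_setOf_eq]
      constructor
      · rintro ⟨h1, h2⟩
        refine ⟨h1, ?_⟩
        rw [abs_mul, abs_of_pos h𝓛pos, ← h𝓛t] at h2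
        exact lt_of_mul_lt_mul_left h2 h𝓛pos.le
      · rintro ⟨h1, h2⟩
        refine ⟨h1, ?_⟩
        rw [abs_mul, abs_of_pos h𝓛pos, ← h𝓛t]
        exact mul_lt_mul_of_pos_left h2 h𝓛pos
    have hx₀D : x₀ ∈ D := (hDmem x₀).2 ⟨hx₀I, by rw [hfx₀]; simpa using ht⟩
    have hDsub : D ⊆ Icc a b := fun x hx => ((hDmem x).1 hx).1
    have hDne : D.Nonempty := ⟨x₀, hx₀D⟩
    have hDU : D ⊆ U := by
      intro x hx
      obtain ⟨hxI, hxt⟩ := (hDmem x).1 hx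
      by_cases hxIoo : x ∈ Ioo (x₀ - η) (x₀ + η)
      · exact ⟨max_le hxI.1 hxIoo.1.le, le_min hxI.2 hxIoo.2.le⟩
      · exfalso
        have := hm₁ x ⟨hxI, hxIoo⟩
        linarith
    have hDconv : ∀ x z y, x ∈ D → z ∈ D → x ≤ y → y ≤ z → y ∈ D := by
      intro x z y hx hz hxy hyz
      obtain ⟨hxI, hxt⟩ := (hDmem x).1 hx
      obtain ⟨hzI, hzt⟩ := (hDmem z).1 hz
      have hyI : y ∈ Icc a b := ⟨le_trans hxI.1 hxy, le_trans hyz hzI.2⟩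
      have hxU := hDU hx
      have hzU := hDU hz
      have hyU : y ∈ U := ⟨le_trans hxU.1 hxy, le_trans hyz hzU.2⟩
      have h1 : g x ≤ g y := hmono.monotoneOn hxU hyU hxy
      have h2 : g y ≤ g z := hmono.monotoneOn hyU hzU hyz
      have h3 : |g y| ≤ max |g x| |g z| := abs_le_max_abs_abs h1 h2
      rw [habsg, habsg, habsg] at h3
      exact (hDmem y).2 ⟨hyI, lt_of_le_of_lt h3 (max_lt hxt hzt)⟩
    set c : ℝ := sInf D with hcdef
    set d : ℝ := sSup D with hddef
    have hDbddB : BddBelow D := ⟨a, fun y hy => (hDsub hy).1⟩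
    have hDbddA : BddAbove D := ⟨b, fun y hy => (hDsub hy).2⟩
    have hca : a ≤ c := le_csInf hDne (fun y hy => (hDsub hy).1)
    have hcx₀ : c ≤ x₀ := csInf_le hDbddB hx₀D
    have hx₀d : x₀ ≤ d := le_csSup hDbddA hx₀D
    have hdb : d ≤ b := csSup_le hDne (fun y hy => (hDsub hy).2)
    have hopen : ∀ z ∈ D, ∃ ε > 0, ∀ y ∈ Icc a b, |y - z| < ε → y ∈ D := by
      intro z hz
      obtain ⟨hzI, hzt⟩ := (hDmem z).1 hz
      have hcont' : ContinuousWithinAt (fun x => |f x|) (Icc a b) z := (hfcont.abs) z hzI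
      have hev : ∀ᶠ y in nhdsWithin z (Icc a b), |f y| < t :=
        Filter.Tendsto.eventually_lt_const hzt hcont'
      rw [eventually_nhdsWithin_iff] at hev
      rw [Metric.eventually_nhds_iff] at hev
      obtain ⟨ε, hε, hprop⟩ := hev
      refine ⟨ε, hε, fun y hy hyd => (hDmem y).2 ⟨hy, ?_⟩⟩
      exact hprop (show dist y z < ε by rwa [Real.dist_eq]) hy
    have hcd : c < d := by
      obtain ⟨ε, hε, hprop⟩ := hopen x₀ hx₀D
      rcases lt_or_eq_of_le hx₀I.2 with hxb | hxb
      · set y := min b (x₀ + ε / 2) with hy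
        have hx₀y : x₀ < y := lt_min hxb (by linarith)
        have hyI : y ∈ Icc a b := ⟨le_trans hx₀I.1 hx₀y.le, min_le_left _ _⟩
        have hyd : |y - x₀| < ε := by
          rw [abs_lt]
          constructor
          · linarith
          · have := min_le_right b (x₀ + ε / 2); linarith
        have hyD := hprop y hyI hyd
        calc c ≤ x₀ := hcx₀
          _ < y := hx₀y
          _ ≤ d := le_csSup hDbddA hyD
      · have hax₀ : a < x₀ := by rw [← hxb] at hab; exact hab
        set y := max a (x₀ - ε / 2) with hy
        have hyx₀ : y < x₀ := max_lt hax₀ (by linarith)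
        have hyI : y ∈ Icc a b := ⟨le_max_left _ _, le_trans hyx₀.le hx₀I.2⟩
        have hyd : |y - x₀| < ε := by
          rw [abs_lt]
          constructor
          · have := le_max_right a (x₀ - ε / 2); linarith
          · linarith
        have hyD := hprop y hyI hyd
        calc c ≤ y := csInf_le hDbddB hyD
          _ < x₀ := hyx₀
          _ ≤ d := hx₀d
    have hcnotD : a < c → c ∉ D := by
      intro h hc
      obtain ⟨ε, hε, hprop⟩ := hopen c hc
      have hcI : c ∈ Icc a b := hDsub hc
      set y := max a (c - ε / 2) with hy
      have hyc : y < c := max_lt h (by linarith)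
      have hyI : y ∈ Icc a b := ⟨le_max_left _ _, le_trans hyc.le hcI.2⟩
      have hyd : |y - c| < ε := by
        rw [abs_lt]
        constructor
        · have := le_max_right a (c - ε / 2); linarith
        · linarith
      have hyD := hprop y hyI hyd
      have := csInf_le hDbddB hyD
      linarith
    have hdnotD : d < b → d ∉ D := by
      intro h hd
      obtain ⟨ε, hε, hprop⟩ := hopen d hd
      have hdI : d ∈ Icc a b := hDsub hd
      set y := min b (d + ε / 2) with hy
      have hdy : d < y := lt_min h (by linarith)
      have hyI : y ∈ Icc a b := ⟨le_trans hdI.1 hdy.le, min_le_left _ _⟩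
      have hyd : |y - d| < ε := by
        rw [abs_lt]
        constructor
        · linarith
        · have := min_le_right b (d + ε / 2); linarith
      have hyD := hprop y hyI hyd
      have := le_csSup hDbddA hyD
      linarith
    have hSclosed : IsClosed (Icc a b \ D) := by
      have h1 : Icc a b \ D = Icc a b ∩ (fun x => |𝓛 * f x|) ⁻¹' (Ici (Real.sqrt 𝓛)) := by
        ext x
        simp only [mem_diff, hD_def, mem_setOf_eq, mem_inter_iff, mem_preimage, mem_Ici,
          not_and, not_lt]
        constructor
        · rintro ⟨h1, h2⟩; exact ⟨h1, h2 h1⟩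
        · rintro ⟨h1, h2⟩; exact ⟨h1, fun _ => h2⟩
      rw [h1]
      exact ContinuousOn.preimage_isClosed_of_isClosed
        ((continuousOn_const.mul hfcont).abs) isClosed_Icc isClosed_Ici
    have hScomp : IsCompact (Icc a b \ D) :=
      isCompact_Icc.of_isClosed_subset hSclosed diff_subset
    have hSmeas : MeasurableSet (Icc a b \ D) := hSclosed.measurableSet
    have hDmeas : MeasurableSet D := by
      have h1 : D = Icc a b \ (Icc a b \ D) := (diff_diff_cancel_left hDsub).symm
      rw [h1]
      exact measurableSet_Icc.diff hSmeas
    have hSt : ∀ x ∈ Icc a b \ D, t ≤ |f x| := by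
      intro x hx
      by_contra h
      exact hx.2 ((hDmem x).2 ⟨hx.1, not_le.1 h⟩)
    have hSge : ∀ x ∈ Icc a b \ D, Real.sqrt 𝓛 ≤ |𝓛 * f x| := by
      intro x hx
      rw [abs_mul, abs_of_pos h𝓛pos, ← h𝓛t]
      exact mul_le_mul_of_nonneg_left (hSt x hx) h𝓛pos.le
    have hbddB2 : BddBelow ((fun x => |𝓛 * f x|) '' (Icc a b \ D)) :=
      ⟨0, fun y ⟨x, _, e⟩ => e ▸ abs_nonneg _⟩
    have hLhat_le : ∀ x ∈ Icc a b \ D, Lhat ≤ |𝓛 * f x| := fun x hx => by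
      rw [hLhat_def]; exact csInf_le hbddB2 ⟨x, hx, rfl⟩
    have hLhat_nn : 0 ≤ Lhat := by
      rw [hLhat_def]
      apply Real.sInf_nonneg
      rintro y ⟨x, _, rfl⟩
      exact abs_nonneg _
    -- data about ρ, B, 𝒜
    set ρd : ℝ → ℝ := dIcc a b ρ with hρddef
    have hρcont : ContinuousOn ρ (Icc a b) := hρ.continuousOn
    have hρdc : ContinuousOn ρd (Icc a b) := hρ.continuousOn_derivWithin hU (by simp)
    have hρdin : ∀ x ∈ Ioo a b, HasDerivAt ρ (ρd x) x := hinner ρ (hρ.of_le (by simp))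
    have hρd_le : ∀ x ∈ Icc a b, |ρd x| ≤ ρ x := by
      intro x hx
      have h1 := hρreg x hx
      have h2 := hρpos x hx
      rw [abs_div, abs_of_pos h2, div_lt_one h2] at h1
      exact h1.le
    have hRbound : ∀ x ∈ Icc a b, ρ x ≤ R := by
      rw [hRdef]
      apply density_sup_bound a b δ hab hδ0 hδ1 hI1 hI2 ρ ρd hρcont
        (fun x hx => ((hρ.differentiableOn (by simp)) x hx).hasDerivWithinAt)
        hρpos hρint hρd_le
    set Bd : ℝ → ℝ := dIcc a b B with hBddef
    have hBcont : ContinuousOn B (Icc a b) := hB.continuousOn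
    have hBdc : ContinuousOn Bd (Icc a b) := hB.continuousOn_derivWithin hU le_rfl
    have hBdin : ∀ x ∈ Ioo a b, HasDerivAt B (Bd x) x := hinner B hB
    set K : ℝ := supAbsOn B (Icc a b) with hKdef
    have hK : ∀ x ∈ Icc a b, |B x| ≤ K :=
      fun x hx => le_supAbsOn (bddAbove_absImage isCompact_Icc hBcont) hx
    have hKnn : 0 ≤ K := le_trans (abs_nonneg _) (hK a (left_mem_Icc.2 hab.le))
    set K' : ℝ := supAbsOn Bd (Icc a b \ D) with hK'def
    have hK'S : ∀ x ∈ Icc a b \ D, |Bd x| ≤ K' := fun x hx =>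
      le_supAbsOn (bddAbove_absImage hScomp (hBdc.mono diff_subset)) hx
    have hK'nn : 0 ≤ K' := by
      rcases (Icc a b \ D).eq_empty_or_nonempty with hS | ⟨w, hw⟩
      · rw [hK'def, hS]
        simp [supAbsOn, Real.sSup_empty]
      · exact le_trans (abs_nonneg _) (hK'S w hw)
    set AB : ℝ := supAbsOn 𝒜 (Icc 0 (2 * π)) with hABdef
    have hAB : ∀ θ, |𝒜 θ| ≤ AB := abs_le_supAbs_of_periodic hA hper
    have hABnn : 0 ≤ AB := supAbsOn_nonneg isCompact_Icc hA.continuousOn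
    have hHB : ∀ θ, |∫ s in (0:ℝ)..θ, 𝒜 s| ≤ 2 * π * AB := primitive_bound hA hper hmean
    have hlognn : 0 ≤ Real.log 𝓛 * 𝓛⁻¹ := mul_nonneg (by linarith) (by positivity)
    -- the per-piece bound
    have hcore : ∀ p q : ℝ, p < q → Icc p q ⊆ Icc a b \ D →
        (∃ z ∈ Icc a b \ D, |𝓛 * f z| ≤ Real.sqrt 𝓛) →
        |∫ x in p..q, B x * 𝒜 (𝓛 * φ x) * ρ x| ≤
          2 * π * AB * (K * c₁ / Lhat + K' * c₂ * (Real.log 𝓛 * 𝓛⁻¹)) := by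
      intro p q hpq hsubS hz
      obtain ⟨z, hzS, hzle⟩ := hz
      have hLhat_pos : 0 < Lhat := by
        rw [hLhat_def]
        apply lt_of_lt_of_le hsq𝓛
        apply le_csInf (Set.Nonempty.image _ ⟨z, hzS⟩)
        rintro y ⟨x, hx, rfl⟩
        exact hSge x hx
      have hLhatsq : Lhat ≤ Real.sqrt 𝓛 := le_trans (hLhat_le z hzS) hzle
      have hsubI : Icc p q ⊆ Icc a b := hsubS.trans diff_subset
      have hmemδ : Icc p q ⊆ Icc (x₀ - δ) (x₀ + δ) := by
        intro x hx
        have hxI := hsubI hx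
        rcases hxI with ⟨e1, e2⟩; rcases hx₀I with ⟨e3, e4⟩
        constructor <;> linarith
      have htc₀δ : t / c₀ ≤ δ := by
        rw [div_le_iff₀ hc₀]
        calc t ≤ c₀ * δ := ht3
          _ = δ * c₀ := by ring
      have hJ1 := integral_inv_abs_le f p q x₀ c₀ t δ hpq.le hc₀ ht htc₀δ
        hmemδ (hfcont.mono hsubI) (fun x hx => hSt x (hsubS hx))
        (fun x hx => hlinI x (hsubI hx))
      have hJ1' : (∫ x in p..q, |f x|⁻¹) ≤ 4 / c₀ * Real.log 𝓛 := by
        have harg : δ * c₀ / t = δ * c₀ * Real.sqrt 𝓛 := by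
          rw [htdef]; field_simp
        have hlogle : Real.log (δ * c₀ / t) ≤ Real.log 𝓛 := by
          rw [harg]
          exact Real.log_le_log (by positivity) ht4
        have h2c₀ : 2 / c₀ ≤ 2 / c₀ * Real.log 𝓛 :=
          le_mul_of_one_le_right (by positivity) hlog1
        have h2c₀' : 2 / c₀ * Real.log (δ * c₀ / t) ≤ 2 / c₀ * Real.log 𝓛 :=
          mul_le_mul_of_nonneg_left hlogle (by positivity)
        calc (∫ x in p..q, |f x|⁻¹) ≤ 2 / c₀ + 2 / c₀ * Real.log (δ * c₀ / t) := hJ1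
          _ ≤ 2 / c₀ * Real.log 𝓛 + 2 / c₀ * Real.log 𝓛 := add_le_add h2c₀ h2c₀'
          _ = 4 / c₀ * Real.log 𝓛 := by ring
      have hJ2 := integral_inv_sq_le f p q x₀ c₀ t δ hpq.le hc₀ ht htc₀δ
        hmemδ (hfcont.mono hsubI) (fun x hx => hSt x (hsubS hx))
        (fun x hx => hlinI x (hsubI hx))
      have hρ1 : (∫ x in p..q, ρ x) ≤ 1 := by
        rw [intervalIntegral.integral_of_le hpq.le, ← hρint]
        apply setIntegral_mono_set (hρcont.integrableOn_compact isCompact_Icc)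
          ((ae_restrict_iff' measurableSet_Icc).2
            (Filter.Eventually.of_forall (fun x hx => (hρpos x hx).le)))
          (HasSubset.Subset.eventuallyLE (fun x hx => hsubI ⟨le_of_lt hx.1, hx.2⟩))
      have hmain := piece_bound a b p q 𝓛 Lhat K K' R M2 (2 * π * AB)
        (4 / c₀ * Real.log 𝓛) (4 / (c₀ * t))
        φ f fd B Bd ρ ρd 𝒜 hpq.le hsubI h𝓛pos hLhat_pos
        hφcont hφd hfcont hfd hfdc hBcont hBdin hBdc hρcont hρdin hρdc hA hHB
        (fun x hx => hLhat_le x (hsubS hx)) (fun x hx => hK x (hsubI hx))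
        (fun x hx => hK'S x (hsubS hx)) (fun x hx => hRbound x (hsubI hx)) hRpos.le
        (fun x hx => (hρpos x (hsubI hx)).le) (fun x hx => hρd_le x (hsubI hx))
        (fun x hx => hM2 x (hsubI hx)) hJ1' hJ2 hρ1
      -- convert
      have e5 : 4 / (c₀ * t) / 𝓛 = 4 / (c₀ * Real.sqrt 𝓛) := by
        rw [htdef]
        field_simp
        linear_combination hss
      have e6 : 4 / (c₀ * Real.sqrt 𝓛) ≤ 4 / (c₀ * Lhat) := by
        apply div_le_div_of_nonneg_left (by norm_num) (by positivity)
        exact mul_le_mul_of_nonneg_left hLhatsq hc₀.le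
      have e7 : K * R * M2 * (4 / (c₀ * t)) / 𝓛 ≤ K * R * M2 * (4 / (c₀ * Lhat)) := by
        have e8 : K * R * M2 * (4 / (c₀ * t)) / 𝓛 = K * R * M2 * (4 / (c₀ * t) / 𝓛) := by ring
        rw [e8, e5]
        exact mul_le_mul_of_nonneg_left e6 (by positivity)
      have e9 : 2 * (K * R / Lhat) + K / Lhat + K * R * M2 * (4 / (c₀ * Lhat))
          = K * c₁ / Lhat := by
        rw [hc₁def]
        field_simp
      have e10 : K' * R * (4 / c₀ * Real.log 𝓛) / 𝓛 = K' * c₂ * (Real.log 𝓛 * 𝓛⁻¹) := by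
        rw [hc₂def]
        field_simp
      calc |∫ x in p..q, B x * 𝒜 (𝓛 * φ x) * ρ x|
          ≤ 2 * π * AB * (2 * (K * R / Lhat) + K / Lhat
            + K' * R * (4 / c₀ * Real.log 𝓛) / 𝓛 + K * R * M2 * (4 / (c₀ * t)) / 𝓛) := hmain
        _ ≤ 2 * π * AB * (2 * (K * R / Lhat) + K / Lhat
            + K' * R * (4 / c₀ * Real.log 𝓛) / 𝓛 + K * R * M2 * (4 / (c₀ * Lhat))) := by
            apply mul_le_mul_of_nonneg_left _ (by positivity)
            linarith
        _ = 2 * π * AB * (K * c₁ / Lhat + K' * c₂ * (Real.log 𝓛 * 𝓛⁻¹)) := by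
            rw [← e9, ← e10]
            ring
    -- nonnegativity of the piece bound
    have hpiecebd_nn : 0 ≤ 2 * π * AB * (K * c₁ / Lhat + K' * c₂ * (Real.log 𝓛 * 𝓛⁻¹)) := by
      apply mul_nonneg (by positivity)
      apply add_nonneg
      · exact div_nonneg (mul_nonneg hKnn hc₁pos.le) hLhat_nn
      · exact mul_nonneg (mul_nonneg hK'nn hc₂pos.le) hlognn
    -- integrability
    have hgfun_cont : ContinuousOn (fun x => B x * 𝒜 (𝓛 * φ x) * ρ x) (Icc a b) :=
      (hBcont.mul (hA.comp_continuousOn (continuousOn_const.mul hφcont))).mul hρcont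
    have hgint : IntegrableOn (fun x => B x * 𝒜 (𝓛 * φ x) * ρ x) (Icc a b) :=
      hgfun_cont.integrableOn_compact isCompact_Icc
    have hsplit1 : (∫ x in Icc a b, B x * 𝒜 (𝓛 * φ x) * ρ x)
        = (∫ x in D, B x * 𝒜 (𝓛 * φ x) * ρ x)
          + ∫ x in Icc a b \ D, B x * 𝒜 (𝓛 * φ x) * ρ x := by
      rw [← setIntegral_union disjoint_sdiff_self_right hSmeas
        (hgint.mono_set hDsub) (hgint.mono_set diff_subset), union_diff_cancel hDsub]
    have hDbound : |∫ x in D, B x * 𝒜 (𝓛 * φ x) * ρ x| ≤ AB * K * ∫ x in D, ρ x := by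
      have h1 : |∫ x in D, B x * 𝒜 (𝓛 * φ x) * ρ x|
          ≤ ∫ x in D, |B x * 𝒜 (𝓛 * φ x) * ρ x| := by
        have h0 := MeasureTheory.norm_integral_le_integral_norm (μ := volume.restrict D)
          (f := fun x => B x * 𝒜 (𝓛 * φ x) * ρ x)
        simp only [Real.norm_eq_abs] at h0
        exact h0
      have h2 : (∫ x in D, |B x * 𝒜 (𝓛 * φ x) * ρ x|) ≤ ∫ x in D, AB * K * ρ x := by
        apply setIntegral_mono_on ((hgint.mono_set hDsub).abs)
          (((hρcont.integrableOn_compact isCompact_Icc).mono_set hDsub).const_mul (AB * K))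
          hDmeas
        intro x hx
        have hxI := hDsub hx
        rw [abs_mul, abs_mul, abs_of_nonneg (hρpos x hxI).le]
        have hBA : |B x| * |𝒜 (𝓛 * φ x)| ≤ K * AB :=
          mul_le_mul (hK x hxI) (hAB _) (abs_nonneg _) hKnn
        calc |B x| * |𝒜 (𝓛 * φ x)| * ρ x ≤ K * AB * ρ x :=
              mul_le_mul_of_nonneg_right hBA (hρpos x hxI).le
          _ = AB * K * ρ x := by ring
      have h3 : (∫ x in D, AB * K * ρ x) = AB * K * ∫ x in D, ρ x := by
        rw [MeasureTheory.integral_const_mul]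
      linarith [h1, h2, h3.le, h3.ge]
    -- S splits into two intervals a.e.
    have hSsplit : (∫ x in Icc a b \ D, B x * 𝒜 (𝓛 * φ x) * ρ x)
        = (∫ x in Icc a c, B x * 𝒜 (𝓛 * φ x) * ρ x)
          + ∫ x in Icc d b, B x * 𝒜 (𝓛 * φ x) * ρ x := by
      have hae : (Icc a b \ D : Set ℝ) =ᵐ[volume] (Icc a c ∪ Icc d b : Set ℝ) := by
        rw [MeasureTheory.ae_eq_set]
        constructor
        · apply measure_mono_null (t := (∅ : Set ℝ))
          · intro x hx
            obtain ⟨⟨hxI, hxD⟩, hxU⟩ := hx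
            exfalso
            have hnotc : ¬ (x ∈ Icc a c) := fun h => hxU (Or.inl h)
            have hnotd : ¬ (x ∈ Icc d b) := fun h => hxU (Or.inr h)
            have hxc : c < x := by
              by_contra h
              exact hnotc ⟨hxI.1, not_lt.1 h⟩
            have hxd : x < d := by
              by_contra h
              exact hnotd ⟨not_lt.1 h, hxI.2⟩
            obtain ⟨y, hyD, hyx⟩ : ∃ y ∈ D, y < x := by
              by_contra hcon
              push_neg at hcon
              have : x ≤ c := le_csInf hDne (fun y hy => hcon y hy)
              linarith
            obtain ⟨w, hwD, hxw⟩ : ∃ w ∈ D, x < w := by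
              by_contra hcon
              push_neg at hcon
              have : d ≤ x := csSup_le hDne (fun y hy => hcon y hy)
              linarith
            exact hxD (hDconv y w x hyD hwD hyx.le hxw.le)
          · simp
        · apply measure_mono_null (t := ({c, d} : Set ℝ))
          · intro x hx
            rcases hx with ⟨hxU, hxS⟩
            have hxI : x ∈ Icc a b := by
              rcases hxU with h | h
              · exact ⟨h.1, le_trans h.2 (le_trans hcx₀ (le_trans hx₀d hdb))⟩
              · exact ⟨le_trans (le_trans hca (le_trans hcx₀ hx₀d)) h.1, h.2⟩
            have hxD : x ∈ D := by
              by_contra hxD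
              exact hxS ⟨hxI, hxD⟩
            rcases hxU with h | h
            · left
              exact le_antisymm h.2 (csInf_le hDbddB hxD)
            · right
              exact le_antisymm (le_csSup hDbddA hxD) h.1
          · exact (Set.toFinite ({c, d} : Set ℝ)).measure_zero volume
      rw [setIntegral_congr_set hae]
      apply setIntegral_union
      · rw [Set.disjoint_left]
        intro x hx1 hx2
        have := hx1.2
        have := hx2.1
        linarith
      · exact measurableSet_Icc
      · exact hgint.mono_set (Icc_subset_Icc_right (le_trans hcx₀ hx₀I.2))
      · exact hgint.mono_set (Icc_subset_Icc_left (le_trans hx₀I.1 hx₀d))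
    -- piece 1
    have hpiece1 : |∫ x in Icc a c, B x * 𝒜 (𝓛 * φ x) * ρ x|
        ≤ 2 * π * AB * (K * c₁ / Lhat + K' * c₂ * (Real.log 𝓛 * 𝓛⁻¹)) := by
      rcases eq_or_lt_of_le hca with heq | hlt
      · have h0 : (∫ x in Icc a c, B x * 𝒜 (𝓛 * φ x) * ρ x) = 0 := by
          rw [← heq, Icc_self]
          have : volume.restrict ({a} : Set ℝ) = 0 :=
            Measure.restrict_eq_zero.2 (by simp)
          rw [this, integral_zero_measure]
        rw [h0, abs_zero]
        exact hpiecebd_nn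
      · have hIccS : Icc a c ⊆ Icc a b \ D := by
          intro x hx
          have hxI : x ∈ Icc a b := ⟨hx.1, le_trans hx.2 (le_trans hcx₀ hx₀I.2)⟩
          refine ⟨hxI, fun hxD => ?_⟩
          have h1 : c ≤ x := csInf_le hDbddB hxD
          have h2 : x = c := le_antisymm hx.2 h1
          exact (hcnotD hlt) (h2 ▸ hxD)
        have hcS : c ∈ Icc a b \ D := hIccS (right_mem_Icc.2 hca)
        have hcval : |𝓛 * f c| ≤ Real.sqrt 𝓛 := by
          have hclos : c ∈ closure D := csInf_mem_closure hDne hDbddB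
          have hnb : (nhdsWithin c D).NeBot := mem_closure_iff_nhdsWithin_neBot.1 hclos
          have hcont' : ContinuousWithinAt (fun x => |𝓛 * f x|) D c :=
            (((continuousOn_const.mul hfcont).abs) c hcS.1).mono hDsub
          apply le_of_tendsto hcont'
          apply eventually_mem_nhdsWithin.mono
          intro y hy
          have := ((hDmem y).1 hy)
          rw [abs_mul, abs_of_pos h𝓛pos, ← h𝓛t]
          exact (mul_le_mul_of_nonneg_left this.2.le h𝓛pos.le)
        have hconv : (∫ x in Icc a c, B x * 𝒜 (𝓛 * φ x) * ρ x)
            = ∫ x in a..c, B x * 𝒜 (𝓛 * φ x) * ρ x := by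
          rw [intervalIntegral.integral_of_le hca, integral_Icc_eq_integral_Ioc]
        rw [hconv]
        exact hcore a c hlt hIccS ⟨c, hcS, hcval⟩
    -- piece 2
    have hpiece2 : |∫ x in Icc d b, B x * 𝒜 (𝓛 * φ x) * ρ x|
        ≤ 2 * π * AB * (K * c₁ / Lhat + K' * c₂ * (Real.log 𝓛 * 𝓛⁻¹)) := by
      rcases eq_or_lt_of_le hdb with heq | hlt
      · have h0 : (∫ x in Icc d b, B x * 𝒜 (𝓛 * φ x) * ρ x) = 0 := by
          rw [heq, Icc_self]
          have : volume.restrict ({b} : Set ℝ) = 0 :=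
            Measure.restrict_eq_zero.2 (by simp)
          rw [this, integral_zero_measure]
        rw [h0, abs_zero]
        exact hpiecebd_nn
      · have hIccS : Icc d b ⊆ Icc a b \ D := by
          intro x hx
          have hxI : x ∈ Icc a b := ⟨le_trans (le_trans hx₀I.1 hx₀d) hx.1, hx.2⟩
          refine ⟨hxI, fun hxD => ?_⟩
          have h1 : x ≤ d := le_csSup hDbddA hxD
          have h2 : x = d := le_antisymm h1 hx.1
          exact (hdnotD hlt) (h2 ▸ hxD)
        have hdS : d ∈ Icc a b \ D := hIccS (left_mem_Icc.2 hdb)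
        have hdval : |𝓛 * f d| ≤ Real.sqrt 𝓛 := by
          have hclos : d ∈ closure D := csSup_mem_closure hDne hDbddA
          have hnb : (nhdsWithin d D).NeBot := mem_closure_iff_nhdsWithin_neBot.1 hclos
          have hcont' : ContinuousWithinAt (fun x => |𝓛 * f x|) D d :=
            (((continuousOn_const.mul hfcont).abs) d hdS.1).mono hDsub
          apply le_of_tendsto hcont'
          apply eventually_mem_nhdsWithin.mono
          intro y hy
          have := ((hDmem y).1 hy)
          rw [abs_mul, abs_of_pos h𝓛pos, ← h𝓛t]
          exact (mul_le_mul_of_nonneg_left this.2.le h𝓛pos.le)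
        have hconv : (∫ x in Icc d b, B x * 𝒜 (𝓛 * φ x) * ρ x)
            = ∫ x in d..b, B x * 𝒜 (𝓛 * φ x) * ρ x := by
          rw [intervalIntegral.integral_of_le hdb, integral_Icc_eq_integral_Ioc]
        rw [hconv]
        exact hcore d b hlt hIccS ⟨d, hdS, hdval⟩
    -- final combination
    have hPnn : 0 ≤ ∫ x in D, ρ x :=
      setIntegral_nonneg hDmeas (fun x hx => (hρpos x (hDsub hx)).le)
    have htotal : |∫ x in Icc a b, B x * 𝒜 (𝓛 * φ x) * ρ x|
        ≤ AB * K * (∫ x in D, ρ x)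
          + 2 * (2 * π * AB * (K * c₁ / Lhat + K' * c₂ * (Real.log 𝓛 * 𝓛⁻¹))) := by
      rw [hsplit1, hSsplit]
      have tri1 := abs_add_le (∫ x in D, B x * 𝒜 (𝓛 * φ x) * ρ x)
        ((∫ x in Icc a c, B x * 𝒜 (𝓛 * φ x) * ρ x)
          + ∫ x in Icc d b, B x * 𝒜 (𝓛 * φ x) * ρ x)
      have tri2 := abs_add_le (∫ x in Icc a c, B x * 𝒜 (𝓛 * φ x) * ρ x)
        (∫ x in Icc d b, B x * 𝒜 (𝓛 * φ x) * ρ x)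
      linarith [hDbound, hpiece1, hpiece2]
    have hfinal1 : 2 * (2 * π * AB * (K * c₁ / Lhat + K' * c₂ * (Real.log 𝓛 * 𝓛⁻¹)))
        ≤ AB * (K * (C / Lhat) + K' * (C * 𝓛⁻¹ * Real.log 𝓛)) := by
      have hq1 : K * (4 * π * c₁) / Lhat ≤ K * C / Lhat := by
        apply div_le_div_of_nonneg_right _ hLhat_nn
        apply mul_le_mul_of_nonneg_left _ hKnn
        rw [hCdef]
        have : 0 ≤ 4 * π * c₂ := by positivity
        linarith
      have hq2 : K' * (4 * π * c₂) * (Real.log 𝓛 * 𝓛⁻¹) ≤ K' * C * (Real.log 𝓛 * 𝓛⁻¹) := by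
        apply mul_le_mul_of_nonneg_right _ hlognn
        apply mul_le_mul_of_nonneg_left _ hK'nn
        rw [hCdef]
        have : 0 ≤ 4 * π * c₁ := by positivity
        linarith
      have e1 : 2 * (2 * π * AB * (K * c₁ / Lhat + K' * c₂ * (Real.log 𝓛 * 𝓛⁻¹)))
          = AB * (K * (4 * π * c₁) / Lhat + K' * (4 * π * c₂) * (Real.log 𝓛 * 𝓛⁻¹)) := by
        ring
      have e2 : AB * (K * (C / Lhat) + K' * (C * 𝓛⁻¹ * Real.log 𝓛))
          = AB * (K * C / Lhat + K' * C * (Real.log 𝓛 * 𝓛⁻¹)) := by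
        ring
      rw [e1, e2]
      apply mul_le_mul_of_nonneg_left _ hABnn
      linarith
    calc |∫ x in Icc a b, B x * 𝒜 (𝓛 * φ x) * ρ x|
        ≤ AB * K * (∫ x in D, ρ x)
          + 2 * (2 * π * AB * (K * c₁ / Lhat + K' * c₂ * (Real.log 𝓛 * 𝓛⁻¹))) := htotal
      _ ≤ AB * K * (∫ x in D, ρ x)
          + AB * (K * (C / Lhat) + K' * (C * 𝓛⁻¹ * Real.log 𝓛)) := by linarith
      _ = AB * (K * ((∫ x in D, ρ x) + C / Lhat) + K' * (C * 𝓛⁻¹ * Real.log 𝓛)) := by ring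
  -- CASE A : no critical point
  · push_neg at hcrit
    obtain ⟨xm, hxmI, hxmmin⟩ :=
      isCompact_Icc.exists_isMinOn (nonempty_Icc.2 hab.le) hfcont.abs
    set m : ℝ := |f xm| with hmdef
    have hm : 0 < m := abs_pos.2 (hcrit xm hxmI)
    have hmle : ∀ x ∈ Icc a b, m ≤ |f x| := fun x hx => hxmmin hx
    refine ⟨Real.exp 1 + (m⁻¹) ^ 2, 2 * π * (2 * R + 1 + R * δ / m + R * M2 * δ / m ^ 2) + 1,
      by positivity, by positivity, ?_⟩
    set C : ℝ := 2 * π * (2 * R + 1 + R * δ / m + R * M2 * δ / m ^ 2) + 1 with hCdef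
    have hπpos0 := Real.pi_pos
    have hCpos : 0 < C := by rw [hCdef]; positivity
    intro 𝓛 h𝓛 ρ hρ hρpos hρint hρreg B hB 𝒜 hA hper hmean
    intro D Lhat
    have hD_def : D = {x | x ∈ Icc a b ∧ |𝓛 * f x| < Real.sqrt 𝓛} := rfl
    have hLhat_def : Lhat = sInf ((fun x => |𝓛 * f x|) '' (Icc a b \ D)) := rfl
    have h𝓛pos : 0 < 𝓛 := lt_of_lt_of_le (by positivity) h𝓛
    have hexp1 : (2:ℝ) ≤ Real.exp 1 := by
      have := Real.add_one_le_exp (1:ℝ); linarith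
    have h𝓛1 : 1 ≤ 𝓛 := by nlinarith [sq_nonneg m⁻¹]
    have hsq𝓛 : 0 < Real.sqrt 𝓛 := Real.sqrt_pos.2 h𝓛pos
    have hss : Real.sqrt 𝓛 * Real.sqrt 𝓛 = 𝓛 := Real.mul_self_sqrt h𝓛pos.le
    have hlog1 : 1 ≤ Real.log 𝓛 := by
      rw [Real.le_log_iff_exp_le h𝓛pos]
      nlinarith [sq_nonneg m⁻¹]
    have hminv : m⁻¹ ≤ Real.sqrt 𝓛 := by
      have h1 : (m⁻¹) ^ 2 ≤ 𝓛 := by nlinarith [Real.exp_pos 1]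
      have := Real.sqrt_le_sqrt h1
      rwa [Real.sqrt_sq (by positivity)] at this
    have h𝓛m : Real.sqrt 𝓛 ≤ 𝓛 * m := by
      have h2 : 1 ≤ Real.sqrt 𝓛 * m := by
        have := mul_le_mul_of_nonneg_right hminv hm.le
        rwa [inv_mul_cancel₀ hm.ne'] at this
      calc Real.sqrt 𝓛 = Real.sqrt 𝓛 * 1 := (mul_one _).symm
        _ ≤ Real.sqrt 𝓛 * (Real.sqrt 𝓛 * m) := by
            apply mul_le_mul_of_nonneg_left h2 hsq𝓛.le
        _ = 𝓛 * m := by rw [← mul_assoc, hss]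
    -- D is empty
    have hD : D = (∅ : Set ℝ) := by
      rw [hD_def]
      ext x
      simp only [mem_setOf_eq, mem_empty_iff_false, iff_false, not_and, not_lt]
      intro hx
      have h1 : 𝓛 * m ≤ 𝓛 * |f x| := mul_le_mul_of_nonneg_left (hmle x hx) h𝓛pos.le
      calc Real.sqrt 𝓛 ≤ 𝓛 * m := h𝓛m
        _ ≤ 𝓛 * |f x| := h1
        _ = |𝓛 * f x| := by rw [abs_mul, abs_of_pos h𝓛pos]
    have hdiffD : Icc a b \ D = Icc a b := by rw [hD, diff_empty]
    -- Lhat facts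
    have hLhat_eq : Lhat = sInf ((fun x => |𝓛 * f x|) '' (Icc a b)) := by
      rw [hLhat_def, hdiffD]
    have hbddB : BddBelow ((fun x => |𝓛 * f x|) '' (Icc a b)) :=
      ⟨0, fun y ⟨x, _, e⟩ => e ▸ abs_nonneg _⟩
    have hLhat_le : ∀ x ∈ Icc a b, Lhat ≤ |𝓛 * f x| := fun x hx => by
      rw [hLhat_eq]; exact csInf_le hbddB ⟨x, hx, rfl⟩
    have himgne : ((fun x => |𝓛 * f x|) '' (Icc a b)).Nonempty :=
      ⟨|𝓛 * f a|, ⟨a, left_mem_Icc.2 hab.le, rfl⟩⟩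
    have hLhat_pos : 0 < Lhat := by
      rw [hLhat_eq]
      apply lt_of_lt_of_le hsq𝓛
      apply le_csInf himgne
      rintro y ⟨x, hx, rfl⟩
      calc Real.sqrt 𝓛 ≤ 𝓛 * m := h𝓛m
        _ ≤ 𝓛 * |f x| := mul_le_mul_of_nonneg_left (hmle x hx) h𝓛pos.le
        _ = |𝓛 * f x| := by rw [abs_mul, abs_of_pos h𝓛pos]
    have hLhat_le𝓛 : Lhat ≤ 𝓛 := by
      refine le_trans (hLhat_le a (left_mem_Icc.2 hab.le)) ?_
      rw [abs_mul, abs_of_pos h𝓛pos]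
      calc 𝓛 * |f a| ≤ 𝓛 * 1 :=
          mul_le_mul_of_nonneg_left (hφnorm a (left_mem_Icc.2 hab.le)) h𝓛pos.le
        _ = 𝓛 := mul_one _
    -- data about ρ, B, 𝒜
    set ρd : ℝ → ℝ := dIcc a b ρ with hρddef
    have hρcont : ContinuousOn ρ (Icc a b) := hρ.continuousOn
    have hρdc : ContinuousOn ρd (Icc a b) := hρ.continuousOn_derivWithin hU (by simp)
    have hρdin : ∀ x ∈ Ioo a b, HasDerivAt ρ (ρd x) x := hinner ρ (hρ.of_le (by simp))
    have hρd_le : ∀ x ∈ Icc a b, |ρd x| ≤ ρ x := by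
      intro x hx
      have h1 := hρreg x hx
      have h2 := hρpos x hx
      rw [abs_div, abs_of_pos h2, div_lt_one h2] at h1
      exact h1.le
    have hRbound : ∀ x ∈ Icc a b, ρ x ≤ R := by
      rw [hRdef]
      apply density_sup_bound a b δ hab hδ0 hδ1 hI1 hI2 ρ ρd hρcont
        (fun x hx => ((hρ.differentiableOn (by simp)) x hx).hasDerivWithinAt)
        hρpos hρint hρd_le
    set Bd : ℝ → ℝ := dIcc a b B with hBddef
    have hBcont : ContinuousOn B (Icc a b) := hB.continuousOn
    have hBdc : ContinuousOn Bd (Icc a b) := hB.continuousOn_derivWithin hU le_rfl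
    have hBdin : ∀ x ∈ Ioo a b, HasDerivAt B (Bd x) x := hinner B hB
    set K : ℝ := supAbsOn B (Icc a b) with hKdef
    have hK : ∀ x ∈ Icc a b, |B x| ≤ K :=
      fun x hx => le_supAbsOn (bddAbove_absImage isCompact_Icc hBcont) hx
    have hKnn : 0 ≤ K := le_trans (abs_nonneg _) (hK a (left_mem_Icc.2 hab.le))
    set K' : ℝ := supAbsOn Bd (Icc a b \ D) with hK'def
    have hK'eq : K' = supAbsOn Bd (Icc a b) := by rw [hK'def, hdiffD]
    have hK' : ∀ x ∈ Icc a b, |Bd x| ≤ K' := fun x hx => by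
      rw [hK'eq]; exact le_supAbsOn (bddAbove_absImage isCompact_Icc hBdc) hx
    have hK'nn : 0 ≤ K' := le_trans (abs_nonneg _) (hK' a (left_mem_Icc.2 hab.le))
    set AB : ℝ := supAbsOn 𝒜 (Icc 0 (2 * π)) with hABdef
    have hABnn : 0 ≤ AB := supAbsOn_nonneg isCompact_Icc hA.continuousOn
    have hHB : ∀ θ, |∫ t in (0:ℝ)..θ, 𝒜 t| ≤ 2 * π * AB := primitive_bound hA hper hmean
    -- integral bounds J1 J2
    have hfinv_int : IntervalIntegrable (fun x => |f x|⁻¹) volume a b :=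
      ((hfcont.abs).inv₀
        (fun x hx => abs_ne_zero.2 (hcrit x hx))).intervalIntegrable_of_Icc hab.le
    have hfsq_int : IntervalIntegrable (fun x => ((f x) ^ 2)⁻¹) volume a b :=
      ((hfcont.pow 2).inv₀
        (fun x hx => pow_ne_zero 2 (hcrit x hx))).intervalIntegrable_of_Icc hab.le
    have hJ1 : (∫ x in a..b, |f x|⁻¹) ≤ δ / m := by
      have h1 : (∫ x in a..b, |f x|⁻¹) ≤ ∫ _x in a..b, m⁻¹ := by
        apply integral_mono_on hab.le hfinv_int intervalIntegrable_const
        intro x hx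
        exact inv_anti₀ hm (hmle x hx)
      rw [intervalIntegral.integral_const, smul_eq_mul] at h1
      calc (∫ x in a..b, |f x|⁻¹) ≤ (b - a) * m⁻¹ := h1
        _ ≤ δ * m⁻¹ := by
            apply mul_le_mul_of_nonneg_right (le_of_lt hI2) (by positivity)
        _ = δ / m := by rw [div_eq_mul_inv]
    have hJ2 : (∫ x in a..b, ((f x) ^ 2)⁻¹) ≤ δ / m ^ 2 := by
      have h1 : (∫ x in a..b, ((f x) ^ 2)⁻¹) ≤ ∫ _x in a..b, (m ^ 2)⁻¹ := by
        apply integral_mono_on hab.le hfsq_int intervalIntegrable_const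
        intro x hx
        apply inv_anti₀ (by positivity)
        calc m ^ 2 ≤ |f x| ^ 2 := pow_le_pow_left₀ hm.le (hmle x hx) 2
          _ = (f x) ^ 2 := sq_abs _
      rw [intervalIntegral.integral_const, smul_eq_mul] at h1
      calc (∫ x in a..b, ((f x) ^ 2)⁻¹) ≤ (b - a) * (m ^ 2)⁻¹ := h1
        _ ≤ δ * (m ^ 2)⁻¹ := by
            apply mul_le_mul_of_nonneg_right (le_of_lt hI2) (by positivity)
        _ = δ / m ^ 2 := by rw [div_eq_mul_inv]
    have hρ1 : (∫ x in a..b, ρ x) ≤ 1 := by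
      rw [intervalIntegral.integral_of_le hab.le, ← integral_Icc_eq_integral_Ioc, hρint]
    -- apply the piece bound on [a,b]
    have hmain := piece_bound a b a b 𝓛 Lhat K K' R M2 (2 * π * AB) (δ / m) (δ / m ^ 2)
      φ f fd B Bd ρ ρd 𝒜 hab.le (subset_refl _) h𝓛pos hLhat_pos
      hφcont hφd hfcont hfd hfdc hBcont hBdin hBdc hρcont hρdin hρdc hA hHB
      hLhat_le hK hK' hRbound hRpos.le (fun x hx => (hρpos x hx).le) hρd_le hM2 hJ1 hJ2 hρ1
    -- convert the LHS
    have hLHS : (∫ x in Icc a b, B x * 𝒜 (𝓛 * φ x) * ρ x)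
        = ∫ x in a..b, B x * 𝒜 (𝓛 * φ x) * ρ x := by
      rw [intervalIntegral.integral_of_le hab.le, integral_Icc_eq_integral_Ioc]
    have hPzero : (∫ x in D, ρ x) = 0 := by rw [hD]; simp
    rw [hLHS, hPzero]
    -- final numeric glue
    have hπpos := Real.pi_pos
    have hinv𝓛 : 𝓛⁻¹ ≤ Lhat⁻¹ := by
      apply inv_anti₀ hLhat_pos hLhat_le𝓛
    have hA1 : 2 * π * (2 * (K * R / Lhat) + K / Lhat + K * R * M2 * (δ / m ^ 2) / 𝓛)
        ≤ K * (C / Lhat) := by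
      have e1 : K * R * M2 * (δ / m ^ 2) / 𝓛 = (K * R * M2 * δ / m ^ 2) * 𝓛⁻¹ := by ring
      have e2 : (K * R * M2 * δ / m ^ 2) * 𝓛⁻¹ ≤ (K * R * M2 * δ / m ^ 2) * Lhat⁻¹ :=
        mul_le_mul_of_nonneg_left hinv𝓛 (by positivity)
      have e3 : 2 * π * (2 * (K * R / Lhat) + K / Lhat + (K * R * M2 * δ / m ^ 2) * Lhat⁻¹)
          = (2 * π * (2 * R + 1 + R * M2 * δ / m ^ 2)) * K * Lhat⁻¹ := by
        field_simp
      have e4 : (2 * π * (2 * R + 1 + R * M2 * δ / m ^ 2)) * K * Lhat⁻¹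
          ≤ C * K * Lhat⁻¹ := by
        apply mul_le_mul_of_nonneg_right (mul_le_mul_of_nonneg_right _ hKnn)
          (by positivity)
        rw [hCdef]
        have hpos1 : 0 ≤ 2 * π * (R * δ / m) := by positivity
        linarith
      calc 2 * π * (2 * (K * R / Lhat) + K / Lhat + K * R * M2 * (δ / m ^ 2) / 𝓛)
          ≤ 2 * π * (2 * (K * R / Lhat) + K / Lhat + (K * R * M2 * δ / m ^ 2) * Lhat⁻¹) := by
            rw [e1]
            apply mul_le_mul_of_nonneg_left _ (by positivity)
            linarith
        _ = (2 * π * (2 * R + 1 + R * M2 * δ / m ^ 2)) * K * Lhat⁻¹ := e3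
        _ ≤ C * K * Lhat⁻¹ := e4
        _ = K * (C / Lhat) := by ring
    have hA2 : 2 * π * (K' * R * (δ / m) / 𝓛) ≤ K' * (C * 𝓛⁻¹ * Real.log 𝓛) := by
      have e1 : 2 * π * (K' * R * (δ / m) / 𝓛) = (2 * π * (R * δ / m)) * K' * 𝓛⁻¹ := by
        field_simp
      have e2 : (2 * π * (R * δ / m)) * K' * 𝓛⁻¹ ≤ C * K' * 𝓛⁻¹ := by
        apply mul_le_mul_of_nonneg_right (mul_le_mul_of_nonneg_right _ hK'nn) (by positivity)
        rw [hCdef]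
        have hpos1 : 0 ≤ 2 * π * (2 * R + 1 + R * M2 * δ / m ^ 2) := by positivity
        linarith
      have e3 : C * K' * 𝓛⁻¹ ≤ C * K' * 𝓛⁻¹ * Real.log 𝓛 :=
        le_mul_of_one_le_right
          (mul_nonneg (mul_nonneg hCpos.le hK'nn) (by positivity)) hlog1
      calc 2 * π * (K' * R * (δ / m) / 𝓛) = (2 * π * (R * δ / m)) * K' * 𝓛⁻¹ := e1
        _ ≤ C * K' * 𝓛⁻¹ := e2
        _ ≤ C * K' * 𝓛⁻¹ * Real.log 𝓛 := e3
        _ = K' * (C * 𝓛⁻¹ * Real.log 𝓛) := by ring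
    calc |∫ x in a..b, B x * 𝒜 (𝓛 * φ x) * ρ x|
        ≤ 2 * π * AB * (2 * (K * R / Lhat) + K / Lhat + K' * R * (δ / m) / 𝓛
          + K * R * M2 * (δ / m ^ 2) / 𝓛) := hmain
      _ = AB * (2 * π * (2 * (K * R / Lhat) + K / Lhat + K * R * M2 * (δ / m ^ 2) / 𝓛)
          + 2 * π * (K' * R * (δ / m) / 𝓛)) := by ring
      _ ≤ AB * (K * (C / Lhat) + K' * (C * 𝓛⁻¹ * Real.log 𝓛)) := by
          apply mul_le_mul_of_nonneg_left _ hABnn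
          linarith
      _ = AB * (K * (0 + C / Lhat) + K' * (C * 𝓛⁻¹ * Real.log 𝓛)) := by rw [zero_add]

end
end

section
/- Fix δ ∈ (0, π/4). Let I be an interval with δ/4 < |I| < δ, let ρ be a regular probability density on I with associated measure ℙ, and let φ : I → ℝ be a smooth function having at most one critical point in I, every critical point being non-degenerate. Then there exist constants c > 0 and C > 0 such that for every real z ≥ 1 one has ℙ({x ∈ I : |φ'(x)| < c·z^(−1)}) ≤ C·z^(−1). -/
open Set Real MeasureTheory

noncomputable section

/-- Measure of the set where the derivative of a function with at most one
non-degenerate critical point is small: `ℙ(|φ'| < c·z⁻¹) ≤ C·z⁻¹` for `z ≥ 1`. -/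
theorem measure_small_derivative_set_le
    (δ a b : ℝ) (hδ0 : 0 < δ) (hδπ : δ < Real.pi / 4)
    (hI1 : δ / 4 < b - a) (hI2 : b - a < δ)
    (ρ : ℝ → ℝ) (hρsmooth : ContDiffOn ℝ (⊤ : ℕ∞) ρ (Icc a b))
    (hρpos : ∀ x ∈ Icc a b, 0 < ρ x)
    (hρint : (∫ x in Icc a b, ρ x) = 1)
    (hρreg : ∀ x ∈ Icc a b, |dIcc a b ρ x / ρ x| < 1)
    (φ : ℝ → ℝ) (hφ : ContDiffOn ℝ (⊤ : ℕ∞) φ (Icc a b))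
    (hφcrit : ∀ x ∈ Icc a b, ∀ y ∈ Icc a b,
      dIcc a b φ x = 0 → dIcc a b φ y = 0 → x = y)
    (hφnondeg : ∀ x ∈ Icc a b, dIcc a b φ x = 0 → dIcc a b (dIcc a b φ) x ≠ 0) :
    ∃ c C : ℝ, 0 < c ∧ 0 < C ∧
      ∀ z : ℝ, 1 ≤ z →
        (∫ x in {x ∈ Icc a b | |dIcc a b φ x| < c * z⁻¹}, ρ x) ≤ C * z⁻¹ := by
  have hab : a < b := by linarith
  have hU : UniqueDiffOn ℝ (Icc a b) := uniqueDiffOn_Icc hab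
  set f : ℝ → ℝ := dIcc a b φ with hfdef
  have hfC : ContDiffOn ℝ (⊤ : ℕ∞) f (Icc a b) := hφ.derivWithin hU (by simp)
  have hfcont : ContinuousOn f (Icc a b) := hfC.continuousOn
  set f' : ℝ → ℝ := dIcc a b f with hf'def
  have hf'C : ContDiffOn ℝ (⊤ : ℕ∞) f' (Icc a b) := hfC.derivWithin hU (by simp)
  have hf'cont : ContinuousOn f' (Icc a b) := hf'C.continuousOn
  have hρcont : ContinuousOn ρ (Icc a b) := hρsmooth.continuousOn
  -- maximum of ρ
  obtain ⟨xM, hxM, hM⟩ := isCompact_Icc.exists_isMaxOn (nonempty_Icc.2 hab.le) hρcont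
  set M : ℝ := ρ xM with hMdef
  have hMpos : 0 < M := hρpos xM hxM
  have hρInt : IntegrableOn ρ (Icc a b) := hρcont.integrableOn_Icc
  -- differentiability of f at interior points
  have hfdiff : ∀ y ∈ Ioo a b, DifferentiableAt ℝ f y := by
    intro y hy
    exact ((hfC.differentiableOn (by simp)) y (Ioo_subset_Icc_self hy)).differentiableAt
      (Icc_mem_nhds hy.1 hy.2)
  have hfderiv : ∀ y ∈ Ioo a b, deriv f y = f' y := by
    intro y hy
    exact (derivWithin_of_mem_nhds (Icc_mem_nhds hy.1 hy.2)).symm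
  by_cases hex : ∃ x ∈ Icc a b, f x = 0
  · -- there is a (unique, nondegenerate) critical point x₀
    obtain ⟨x₀, hx₀, hfx₀⟩ := hex
    have hnd : f' x₀ ≠ 0 := hφnondeg x₀ hx₀ hfx₀
    set m₀ : ℝ := |f' x₀| with hm₀def
    have hm₀ : 0 < m₀ := abs_pos.2 hnd
    -- neighborhood where |f' - f' x₀| < m₀/2
    have hmem : {x : ℝ | |f' x - f' x₀| < m₀ / 2} ∈ nhdsWithin x₀ (Icc a b) := by
      have := (hf'cont x₀ hx₀) (Metric.ball_mem_nhds (f' x₀) (by positivity : (0:ℝ) < m₀/2))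
      simpa [Metric.mem_ball, Real.dist_eq, Set.preimage] using this
    obtain ⟨η, hη, hball⟩ := Metric.mem_nhdsWithin_iff.1 hmem
    -- key lower bound near x₀
    have key : ∀ x ∈ Icc a b, |x - x₀| < η → m₀ / 2 * |x - x₀| ≤ |f x| := by
      intro x hx hxη
      have hsub : ∀ y, y ∈ Icc (min x x₀) (max x x₀) → y ∈ Icc a b ∧ |f' y - f' x₀| < m₀ / 2 := by
        intro y hy
        have hy1 : a ≤ y := le_trans (le_min hx.1 hx₀.1) hy.1
        have hy2 : y ≤ b := le_trans hy.2 (max_le hx.2 hx₀.2)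
        have hyI : y ∈ Icc a b := ⟨hy1, hy2⟩
        refine ⟨hyI, ?_⟩
        have hyb : y ∈ Metric.ball x₀ η := by
          rw [Metric.mem_ball, Real.dist_eq, abs_lt]
          have hxx := abs_lt.1 hxη
          have hlo : x₀ - η < min x x₀ := lt_min (by linarith [hxx.1]) (by linarith)
          have hhi : max x x₀ < x₀ + η := max_lt (by linarith [hxx.2]) (by linarith)
          constructor
          · linarith [hy.1]
          · linarith [hy.2]
        exact hball ⟨hyb, hyI⟩
      have hintsub : ∀ y ∈ interior (Icc (min x x₀) (max x x₀)), y ∈ Ioo a b := by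
        intro y hy
        rw [interior_Icc] at hy
        exact ⟨lt_of_le_of_lt (le_min hx.1 hx₀.1) hy.1, lt_of_lt_of_le hy.2 (max_le hx.2 hx₀.2)⟩
      have hDconv : Convex ℝ (Icc (min x x₀) (max x x₀)) := convex_Icc _ _
      have hDcont : ContinuousOn f (Icc (min x x₀) (max x x₀)) :=
        hfcont.mono (fun y hy => (hsub y hy).1)
      have hDdiff : DifferentiableOn ℝ f (interior (Icc (min x x₀) (max x x₀))) :=
        fun y hy => (hfdiff y (hintsub y hy)).differentiableWithinAt
      have hxD : x ∈ Icc (min x x₀) (max x x₀) := ⟨min_le_left _ _, le_max_left _ _⟩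
      have hx₀D : x₀ ∈ Icc (min x x₀) (max x x₀) := ⟨min_le_right _ _, le_max_right _ _⟩
      rcases lt_or_gt_of_ne hnd with hneg | hpos
      · -- f' x₀ < 0 : deriv f ≤ -(m₀/2) on interior
        have hder : ∀ y ∈ interior (Icc (min x x₀) (max x x₀)), deriv f y ≤ -(m₀ / 2) := by
          intro y hy
          have h1 := (hsub y (interior_subset hy)).2
          have h2 := hfderiv y (hintsub y hy)
          have hm₀eq : m₀ = -(f' x₀) := abs_of_neg hneg
          rw [h2]
          have := abs_lt.1 h1
          linarith [this.2]
        have hmvt := hDconv.image_sub_le_mul_sub_of_deriv_le hDcont hDdiff hder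
        rcases le_total x x₀ with h | h
        · have hkey := hmvt x hxD x₀ hx₀D h
          rw [hfx₀] at hkey
          have habs : |x - x₀| = x₀ - x := by rw [abs_sub_comm, abs_of_nonneg (by linarith)]
          rw [habs]
          calc m₀ / 2 * (x₀ - x) ≤ f x := by linarith
            _ ≤ |f x| := le_abs_self _
        · have hkey := hmvt x₀ hx₀D x hxD h
          rw [hfx₀] at hkey
          have habs : |x - x₀| = x - x₀ := abs_of_nonneg (by linarith)
          rw [habs]
          calc m₀ / 2 * (x - x₀) ≤ -f x := by linarith
            _ ≤ |f x| := neg_le_abs _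
      · -- f' x₀ > 0 : deriv f ≥ m₀/2 on interior
        have hder : ∀ y ∈ interior (Icc (min x x₀) (max x x₀)), m₀ / 2 ≤ deriv f y := by
          intro y hy
          have h1 := (hsub y (interior_subset hy)).2
          have h2 := hfderiv y (hintsub y hy)
          have hm₀eq : m₀ = f' x₀ := abs_of_pos hpos
          rw [h2]
          have := abs_lt.1 h1
          linarith [this.1]
        have hmvt := hDconv.mul_sub_le_image_sub_of_le_deriv hDcont hDdiff hder
        rcases le_total x x₀ with h | h
        · have hkey := hmvt x hxD x₀ hx₀D h
          rw [hfx₀] at hkey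
          have habs : |x - x₀| = x₀ - x := by rw [abs_sub_comm, abs_of_nonneg (by linarith)]
          rw [habs]
          calc m₀ / 2 * (x₀ - x) ≤ -f x := by linarith
            _ ≤ |f x| := neg_le_abs _
        · have hkey := hmvt x₀ hx₀D x hxD h
          rw [hfx₀] at hkey
          have habs : |x - x₀| = x - x₀ := abs_of_nonneg (by linarith)
          rw [habs]
          calc m₀ / 2 * (x - x₀) ≤ f x := by linarith
            _ ≤ |f x| := le_abs_self _
    -- lower bound away from x₀
    have hout : ∃ m₂ > 0, ∀ x ∈ Icc a b, η ≤ |x - x₀| → m₂ ≤ |f x| := by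
      set K : Set ℝ := Icc a b ∩ {x | η ≤ |x - x₀|} with hKdef
      by_cases hKne : K.Nonempty
      · have hKclosed : IsClosed {x : ℝ | η ≤ |x - x₀|} :=
          isClosed_le continuous_const ((continuous_id.sub continuous_const).abs)
        have hKcomp : IsCompact K := isCompact_Icc.inter_right hKclosed
        obtain ⟨x₁, hx₁, hmin⟩ := hKcomp.exists_isMinOn hKne
          ((hfcont.mono (inter_subset_left)).abs)
        refine ⟨|f x₁|, ?_, ?_⟩
        · by_contra h
          push_neg at h
          have h0 : f x₁ = 0 := abs_eq_zero.1 (le_antisymm h (abs_nonneg _))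
          have := hφcrit x₁ hx₁.1 x₀ hx₀ h0 hfx₀
          have : |x₁ - x₀| = 0 := by rw [this]; simp
          have := hx₁.2
          simp only [mem_setOf_eq] at this
          linarith
        · intro x hx hxη
          exact hmin ⟨hx, hxη⟩
      · exact ⟨1, one_pos, fun x hx hxη => (hKne ⟨x, ⟨hx, hxη⟩⟩).elim⟩
    obtain ⟨m₂, hm₂, hm₂le⟩ := hout
    refine ⟨m₂, M * (4 * m₂ / m₀), hm₂, by positivity, ?_⟩
    intro z hz
    have hz0 : 0 < z := lt_of_lt_of_le one_pos hz
    have hzinv : 0 < z⁻¹ := inv_pos.2 hz0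
    have hzinv1 : z⁻¹ ≤ 1 := inv_le_one_of_one_le₀ hz
    set r : ℝ := 2 * m₂ / m₀ * z⁻¹ with hrdef
    have hr : 0 < r := by positivity
    set S : Set ℝ := {x ∈ Icc a b | |f x| < m₂ * z⁻¹} with hSdef
    set T : Set ℝ := Icc a b ∩ Metric.ball x₀ r with hTdef
    have hST : S ⊆ T := by
      intro x hx
      obtain ⟨hxI, hxf⟩ := hx
      refine ⟨hxI, ?_⟩
      rw [Metric.mem_ball, Real.dist_eq]
      by_cases hnear : |x - x₀| < η
      · have h2 : m₀ / 2 * |x - x₀| < m₂ * z⁻¹ := lt_of_le_of_lt (key x hxI hnear) hxf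
        show |x - x₀| < 2 * m₂ / m₀ * z⁻¹
        rw [div_mul_eq_mul_div, lt_div_iff₀ hm₀]
        nlinarith [abs_nonneg (x - x₀)]
      · push_neg at hnear
        exfalso
        have h3 : m₂ ≤ |f x| := hm₂le x hxI hnear
        nlinarith
    have hTmeas : MeasurableSet T := measurableSet_Icc.inter measurableSet_ball
    have hTInt : IntegrableOn ρ T := hρInt.mono_set (inter_subset_left)
    have h1 : (∫ x in S, ρ x) ≤ ∫ x in T, ρ x := by
      refine setIntegral_mono_set hTInt ?_ (HasSubset.Subset.eventuallyLE hST)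
      exact (ae_restrict_iff' hTmeas).2 (Filter.Eventually.of_forall fun x hx => (hρpos x hx.1).le)
    have hTvol : volume T < ⊤ := lt_of_le_of_lt
      (measure_mono (inter_subset_right)) (by rw [Real.volume_ball]; exact ENNReal.ofReal_lt_top)
    have h2 : (∫ x in T, ρ x) ≤ M * (volume T).toReal := by
      have := MeasureTheory.norm_setIntegral_le_of_norm_le_const (μ := volume) (s := T) hTvol
        (fun x hx => by rw [Real.norm_eq_abs, abs_of_pos (hρpos x hx.1)]; exact hM hx.1)
      calc (∫ x in T, ρ x) ≤ ‖∫ x in T, ρ x‖ := le_abs_self _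
        _ ≤ M * (volume T).toReal := this
    have h3 : (volume T).toReal ≤ 2 * r := by
      refine ENNReal.toReal_le_of_le_ofReal (by positivity) ?_
      calc volume T ≤ volume (Metric.ball x₀ r) := measure_mono (inter_subset_right)
        _ = ENNReal.ofReal (2 * r) := Real.volume_ball _ _
    calc (∫ x in S, ρ x) ≤ M * (volume T).toReal := le_trans h1 h2
      _ ≤ M * (2 * r) := by nlinarith
      _ = M * (4 * m₂ / m₀) * z⁻¹ := by rw [hrdef]; ring
  · -- no critical point: |f| has a positive minimum
    push_neg at hex
    obtain ⟨x₁, hx₁, hmin⟩ := isCompact_Icc.exists_isMinOn (nonempty_Icc.2 hab.le) hfcont.abs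
    set m : ℝ := |f x₁| with hmdef
    have hm : 0 < m := abs_pos.2 (hex x₁ hx₁)
    refine ⟨m, 1, hm, one_pos, ?_⟩
    intro z hz
    have hz0 : 0 < z := lt_of_lt_of_le one_pos hz
    have hzinv : 0 < z⁻¹ := inv_pos.2 hz0
    have hzinv1 : z⁻¹ ≤ 1 := inv_le_one_of_one_le₀ hz
    have hempty : {x ∈ Icc a b | |f x| < m * z⁻¹} = ∅ := by
      ext x
      simp only [mem_setOf_eq, mem_empty_iff_false, iff_false, not_and, not_lt]
      intro hx
      calc m * z⁻¹ ≤ m * 1 := by nlinarith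
        _ = m := mul_one m
        _ ≤ |f x| := hmin hx
    rw [hempty]
    simp only [Measure.restrict_empty, integral_zero_measure]
    positivity

end
end
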